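/- arXiv:2006.10493 — 5 statements merged into one kernel-verified Lean document; each statement's English description precedes it below -/
import Mathlib

section
/- Let (V,E,μ) be a weighted graph and A, B ≥ 1 constants such that every vertex has at most A neighbours and μ(i,j) ≤ B·μ(i) for every edge (i,j) ∈ E. If the discrete 1-Poincaré inequality holds with constant C > 0, then for every τ ≥ 1 the discrete τ-Poincaré inequality holds with constant 2Cτ(AB)^{1−1/τ}, i.e. (Σ_{i∈V}|f(i)|^τ μ(i))^{1/τ} ≤ 2Cτ(AB)^{1−1/τ} (Σ_{(i,j)∈E}|f(i) − f(j)|^τ μ(i,j))^{1/τ} for every finitely supported f : V → ℝ. -/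
open MeasureTheory Metric Set Filter
open scoped ENNReal NNReal Topology

noncomputable section

/-- `g` is an upper gradient of `f`: along every rectifiable curve parametrized by arc length
(formalized as a `1`-Lipschitz curve defined on an interval `[0, L]`), the variation of `f`
between the endpoints is controlled by the line integral of `g` along the curve. -/
def IsUpperGradient {X : Type*} [MetricSpace X] (f : X → ℝ) (g : X → ℝ≥0∞) : Prop :=
  ∀ L : ℝ, 0 ≤ L → ∀ γ : ℝ → X, LipschitzOnWith 1 γ (Icc 0 L) →
    ENNReal.ofReal |f (γ L) - f (γ 0)| ≤ ∫⁻ u in Icc (0 : ℝ) L, g (γ u)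

/-- Membership in `L^p(X, m)` for a real exponent `p`. -/
def MemLpR {X : Type*} [MeasurableSpace X] (m : Measure X) (p : ℝ) (f : X → ℝ) : Prop :=
  AEMeasurable f m ∧ (∫⁻ x, ENNReal.ofReal |f x| ^ p ∂m) < ∞

/-- The Cheeger `p`-energy of `f`: the infimum of `liminf ∫ gₙ^p dm` over all sequences
`fₙ ∈ L^p` converging to `f` in `L^p` and upper gradients `gₙ` of `fₙ`. -/
def cheegerEnergy {X : Type*} [MetricSpace X] [MeasurableSpace X]
    (m : Measure X) (p : ℝ) (f : X → ℝ) : ℝ≥0∞ :=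
  ⨅ (F : ℕ → X → ℝ) (G : ℕ → X → ℝ≥0∞) (_ : ∀ n, MemLpR m p (F n))
    (_ : ∀ n, IsUpperGradient (F n) (G n))
    (_ : Tendsto (fun n => ∫⁻ x, ENNReal.ofReal |F n x - f x| ^ p ∂m) atTop (𝓝 0)),
    liminf (fun n => ∫⁻ x, G n x ^ p ∂m) atTop

/-- `f ∈ H^{1,p}(X, d, m)`: `f ∈ L^p` and its Cheeger `p`-energy is finite. -/
def MemH1 {X : Type*} [MetricSpace X] [MeasurableSpace X]
    (m : Measure X) (p : ℝ) (f : X → ℝ) : Prop :=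
  MemLpR m p f ∧ cheegerEnergy m p f < ∞

/-- The measure `m` is finite and nonzero on balls of finite nonzero radius. -/
def BallRegular {X : Type*} [MetricSpace X] [MeasurableSpace X] (m : Measure X) : Prop :=
  ∀ (x : X) (r : ℝ), 0 < r → m (ball x r) ≠ 0 ∧ m (ball x r) < ∞

/-- `m` is globally doubling with doubling dimension `Q`, i.e. doubling constant `2 ^ Q`. -/
def DoublingOfDim {X : Type*} [MetricSpace X] [MeasurableSpace X]
    (m : Measure X) (Q : ℝ) : Prop :=
  ∀ (x : X) (r : ℝ), 0 < r → m (ball x (2 * r)) ≤ ENNReal.ofReal (2 ^ Q) * m (ball x r)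

/-- The weak `(p,p)` Poincaré inequality with constants `C_P > 0` and `lam ≥ 1`. -/
def WeakPoincare {X : Type*} [MetricSpace X] [MeasurableSpace X]
    (m : Measure X) (p C_P lam : ℝ) : Prop :=
  ∀ f : X → ℝ, LocallyIntegrable f m →
    ∀ g : X → ℝ≥0∞, Measurable g → IsUpperGradient f g → (∫⁻ x, g x ^ p ∂m) < ∞ →
      ∀ (x : X) (r : ℝ), 0 < r →
        ((∫⁻ y in ball x r, ENNReal.ofReal |f y - (⨍ z in ball x r, f z ∂m)| ^ p ∂m) /
            m (ball x r)) ^ (1 / p) ≤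
          ENNReal.ofReal (C_P * r) *
            ((∫⁻ y in ball x (lam * r), g y ^ p ∂m) / m (ball x (lam * r))) ^ (1 / p)

/-- Reverse doubling at the point `o`: `m(B_R(o))/m(B_r(o)) ≥ C_o (R/r)^η` for `0 < r ≤ R`. -/
def ReverseDoubling {X : Type*} [MetricSpace X] [MeasurableSpace X]
    (m : Measure X) (o : X) (C_o η : ℝ) : Prop :=
  ∀ r R : ℝ, 0 < r → r ≤ R → ENNReal.ofReal (C_o * (R / r) ^ η) * m (ball o r) ≤ m (ball o R)

/-- The weighted measure `μ_{s,t}` with density `m(B_{d(o,x)}(o))^{t/s-1} · d(o,x)^{-t}`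
with respect to `m`. -/
def weightMeasure {X : Type*} [MetricSpace X] [MeasurableSpace X]
    (m : Measure X) (o : X) (s t : ℝ) : Measure X :=
  m.withDensity fun x => m (ball o (dist o x)) ^ (t / s - 1) * ENNReal.ofReal (dist o x) ^ (-t)

/-- A geodesic metric space: any two points are joined by a curve of length equal to their
distance (formalized: a `1`-Lipschitz curve defined on `[0, d(x,y)]` from `x` to `y`). -/
def IsGeodesicSpace (X : Type*) [MetricSpace X] : Prop :=
  ∀ x y : X, ∃ γ : ℝ → X, γ 0 = x ∧ γ (dist x y) = y ∧ LipschitzOnWith 1 γ (Icc 0 (dist x y))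

/-- A good covering of the doubly measured metric space `(X, d, m, μ)`, indexed by `I`,
with parameters `Q₁` and `Q₂`. -/
structure GoodCovering {X : Type*} [MetricSpace X] [MeasurableSpace X]
    (m μ : Measure X) (I : Type*) (Q₁ Q₂ : ℝ) where
  U : I → Set X
  Ustar : I → Set X
  Usharp : I → Set X
  countable : Countable I
  measurable_U : ∀ i, MeasurableSet (U i)
  measurable_Ustar : ∀ i, MeasurableSet (Ustar i)
  measurable_Usharp : ∀ i, MeasurableSet (Usharp i)
  finite_m : ∀ i, m (Usharp i) < ∞
  finite_mu : ∀ i, μ (Usharp i) < ∞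
  U_subset_Ustar : ∀ i, U i ⊆ Ustar i
  Ustar_subset_Usharp : ∀ i, Ustar i ⊆ Usharp i
  cover_m : m (univ \ ⋃ i, U i) = 0
  cover_mu : μ (univ \ ⋃ i, U i) = 0
  overlap_finite : ∀ i, {j : I | (closure (Usharp j) ∩ closure (Usharp i)).Nonempty}.Finite
  overlap_card : ∀ i,
    (Nat.card {j : I | (closure (Usharp j) ∩ closure (Usharp i)).Nonempty} : ℝ) ≤ Q₁
  chain : ∀ i j : I, (closure (U i) ∩ closure (U j)).Nonempty →
    ∃ k : I, U i ∪ U j ⊆ Ustar k ∧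
      m (Ustar k) ≤ ENNReal.ofReal Q₂ * min (m (U i)) (m (U j)) ∧
      μ (Ustar k) ≤ ENNReal.ofReal Q₂ * min (μ (U i)) (μ (U j))

/-!
Apply the `1`-Poincaré inequality to `|f|^τ`. By convexity of `x ↦ x^τ`,
`||f i|^τ - |f j|^τ| ≤ τ (|f i|^(τ-1) + |f j|^(τ-1)) |f i - f j|`, and since the edge set and the
edge weights are symmetric, the two halves contribute equally. Hölder's inequality with exponents
`1 - 1/τ` and `1/τ` bounds the remaining edge sum by
`(∑ₑ |f i|^τ μ(i,j))^(1-1/τ) (∑ₑ |f i - f j|^τ μ(i,j))^(1/τ)`, and the degree and weight bounds give `∑ₑ |f i|^τ μ(i,j) ≤ A B ∑ᵢ |f i|^τ μ(i)`.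
Dividing by the finite quantity `(∑ᵢ |f i|^τ μ(i))^(1-1/τ)` gives the claim.
-/

lemma Real.rpow_sub_rpow_le_mul_sub {τ a b : ℝ} (hτ : 1 ≤ τ) (hb : 0 ≤ b) (hba : b ≤ a) :
    a ^ τ - b ^ τ ≤ τ * a ^ (τ - 1) * (a - b) := by
  rcases hba.eq_or_lt with rfl | hlt
  · simp
  have hslope := (convexOn_rpow hτ).slope_le_of_hasDerivAt hb (hb.trans hlt.le) hlt
    (Real.hasDerivAt_rpow_const (Or.inr hτ))
  rwa [slope_def_field, div_le_iff₀ (sub_pos.2 hlt)] at hslope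

lemma Real.abs_abs_rpow_sub_abs_rpow_le {τ : ℝ} (hτ : 1 ≤ τ) (a b : ℝ) :
    |(|a| ^ τ - |b| ^ τ)| ≤ τ * (|a| ^ (τ - 1) + |b| ^ (τ - 1)) * |a - b| := by
  wlog hba : |b| ≤ |a| generalizing a b
  · have := this b a (le_of_not_ge hba)
    rwa [abs_sub_comm, abs_sub_comm b a, add_comm] at this
  rw [abs_of_nonneg (sub_nonneg.2 (Real.rpow_le_rpow (abs_nonneg b) hba (by linarith)))]
  calc |a| ^ τ - |b| ^ τ ≤ τ * |a| ^ (τ - 1) * (|a| - |b|) :=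
        Real.rpow_sub_rpow_le_mul_sub hτ (abs_nonneg b) hba
    _ ≤ τ * (|a| ^ (τ - 1) + |b| ^ (τ - 1)) * |a - b| := by
        gcongr
        · linarith [Real.rpow_nonneg (abs_nonneg b) (τ - 1)]
        · exact abs_sub_abs_le_abs_sub a b

lemma ENNReal.tsum_rpow_mul_rpow_le {ι : Type*} (f g : ι → ℝ≥0∞) {p q : ℝ} (hp : 0 ≤ p)
    (hq : 0 ≤ q) (hpq : p + q = 1) :
    ∑' i, f i ^ p * g i ^ q ≤ (∑' i, f i) ^ p * (∑' i, g i) ^ q := by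
  let _ : MeasurableSpace ι := ⊤
  have hf : Measurable f := measurable_from_top
  have hg : Measurable g := measurable_from_top
  have := ENNReal.lintegral_mul_norm_pow_le (μ := Measure.count) hf.aemeasurable
    hg.aemeasurable hp hq hpq
  rwa [lintegral_count' (f := fun i => f i ^ p * g i ^ q) measurable_from_top,
    lintegral_count' hf, lintegral_count' hg] at this

lemma ENNReal.rpow_le_of_le_mul_rpow_one_sub {S K : ℝ≥0∞} {p : ℝ} (hp : 0 < p) (hS : S ≠ ⊤)
    (h : S ≤ K * S ^ (1 - p)) : S ^ p ≤ K := by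
  rcases eq_or_ne S 0 with rfl | hS0
  · simp [ENNReal.zero_rpow_of_pos hp]
  have hsplit : S = S ^ p * S ^ (1 - p) := by
    rw [← ENNReal.rpow_add _ _ hS0 hS, add_sub_cancel, ENNReal.rpow_one]
  refine (ENNReal.mul_le_mul_iff_left (ENNReal.rpow_pos (p := 1 - p) (pos_iff_ne_zero.2 hS0) hS).ne'
    (ENNReal.rpow_ne_top_of_ne_zero hS0 hS)).1 ?_
  rwa [← hsplit]

lemma ENNReal.ofReal_rpow_sub_one_mul_mul {τ x d w : ℝ} (hτ : 1 ≤ τ) (hx : 0 ≤ x) (hd : 0 ≤ d)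
    (hw : 0 ≤ w) :
    ENNReal.ofReal (x ^ (τ - 1) * d * w) =
      ENNReal.ofReal (x ^ τ * w) ^ (1 - 1 / τ) * ENNReal.ofReal (d ^ τ * w) ^ (1 / τ) := by
  have hτ0 : τ ≠ 0 := by positivity
  have hθ : 0 ≤ 1 - 1 / τ := sub_nonneg.2 ((div_le_one (by positivity)).2 hτ)
  rw [ENNReal.ofReal_rpow_of_nonneg (by positivity) hθ,
    ENNReal.ofReal_rpow_of_nonneg (by positivity) (by positivity),
    ← ENNReal.ofReal_mul (by positivity), Real.mul_rpow (by positivity) hw,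
    Real.mul_rpow (by positivity) hw, ← Real.rpow_mul hx, ← Real.rpow_mul hd,
    mul_one_sub, mul_one_div_cancel hτ0, Real.rpow_one]
  congr 1
  calc x ^ (τ - 1) * d * w = x ^ (τ - 1) * d * w ^ (1 - 1 / τ + 1 / τ) := by simp
    _ = _ := by rw [Real.rpow_add' hw (by simp)]; ring

lemma ENNReal.tsum_ofReal_ne_top_of_finite_support {ι : Type*} {g : ι → ℝ}
    (hg : (Function.support g).Finite) : ∑' i, ENNReal.ofReal (g i) ≠ ⊤ := by
  rw [tsum_eq_sum (s := hg.toFinset) fun i hi => by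
    simp [Function.notMem_support.1 (by simpa using hi)]]
  exact ENNReal.sum_ne_top.2 fun _ _ => ENNReal.ofReal_ne_top

section WeightedGraph

variable {V : Type*} {E : V → V → Prop}

lemma tsum_edge_swap (hE : ∀ i j, E i j → E j i) (F : V → V → ℝ≥0∞) :
    ∑' e : {q : V × V // E q.1 q.2}, F e.1.2 e.1.1 =
      ∑' e : {q : V × V // E q.1 q.2}, F e.1.1 e.1.2 :=
  (Equiv.subtypeEquiv (Equiv.prodComm V V) fun _ => ⟨hE _ _, hE _ _⟩).tsum_eq
    fun e : {q : V × V // E q.1 q.2} => F e.1.1 e.1.2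

lemma tsum_edge_le_mul_tsum (hfin : ∀ i, {j | E i j}.Finite) {A : ℝ}
    (hdeg : ∀ i, (Nat.card {j | E i j} : ℝ) ≤ A) (g : V → ℝ≥0∞) :
    ∑' e : {q : V × V // E q.1 q.2}, g e.1.1 ≤ ENNReal.ofReal A * ∑' i, g i := by
  rw [← (Equiv.subtypeProdEquivSigmaSubtype E).symm.tsum_eq, ENNReal.tsum_sigma',
    ← ENNReal.tsum_mul_left]
  refine ENNReal.tsum_le_tsum fun i => ?_
  have : Fintype {j // E i j} := (hfin i).fintype
  change ∑' _ : {j // E i j}, g i ≤ _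
  rw [tsum_fintype, Finset.sum_const, nsmul_eq_mul, Finset.card_univ]
  gcongr
  rw [← ENNReal.ofReal_natCast, ← Nat.card_eq_fintype_card]
  exact ENNReal.ofReal_le_ofReal (hdeg i)

lemma tsum_edge_ofReal_mul_le (hfin : ∀ i, {j | E i j}.Finite) {A B : ℝ}
    (hdeg : ∀ i, (Nat.card {j | E i j} : ℝ) ≤ A) (hB : 0 ≤ B) {wV : V → ℝ} {wE : V → V → ℝ}
    (hwEB : ∀ i j, E i j → wE i j ≤ B * wV i) {g : V → ℝ} (hg : ∀ i, 0 ≤ g i) :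
    ∑' e : {q : V × V // E q.1 q.2}, ENNReal.ofReal (g e.1.1 * wE e.1.1 e.1.2) ≤
      ENNReal.ofReal A * ENNReal.ofReal B * ∑' i, ENNReal.ofReal (g i * wV i) := by
  calc ∑' e : {q : V × V // E q.1 q.2}, ENNReal.ofReal (g e.1.1 * wE e.1.1 e.1.2)
      ≤ ∑' e : {q : V × V // E q.1 q.2},
          ENNReal.ofReal B * ENNReal.ofReal (g e.1.1 * wV e.1.1) := by
        refine ENNReal.tsum_le_tsum fun e => ?_
        rw [← ENNReal.ofReal_mul hB]
        exact ENNReal.ofReal_le_ofReal (by nlinarith [hg e.1.1, hwEB _ _ e.2])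
    _ ≤ ENNReal.ofReal A * ∑' i, ENNReal.ofReal B * ENNReal.ofReal (g i * wV i) :=
        tsum_edge_le_mul_tsum hfin hdeg fun i => ENNReal.ofReal B * ENNReal.ofReal (g i * wV i)
    _ = ENNReal.ofReal A * ENNReal.ofReal B * ∑' i, ENNReal.ofReal (g i * wV i) := by
        rw [ENNReal.tsum_mul_left, mul_assoc]

lemma tsum_edge_abs_rpow_sub_le_two_mul (hE : ∀ i j, E i j → E j i) {w : V → V → ℝ}
    (hw : ∀ i j, E i j → 0 ≤ w i j) (hwsymm : ∀ i j, E i j → w i j = w j i) {τ : ℝ}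
    (hτ : 1 ≤ τ) (f : V → ℝ) :
    ∑' e : {q : V × V // E q.1 q.2},
        ENNReal.ofReal (|(|f e.1.1| ^ τ - |f e.1.2| ^ τ)| * w e.1.1 e.1.2) ≤
      2 * ENNReal.ofReal τ * ∑' e : {q : V × V // E q.1 q.2},
        ENNReal.ofReal (|f e.1.1| ^ (τ - 1) * |f e.1.1 - f e.1.2| * w e.1.1 e.1.2) := by
  set F : V → V → ℝ≥0∞ := fun i j => ENNReal.ofReal (|f i| ^ (τ - 1) * |f i - f j| * w i j)
  have hpoint : ∀ e : {q : V × V // E q.1 q.2},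
      ENNReal.ofReal (|(|f e.1.1| ^ τ - |f e.1.2| ^ τ)| * w e.1.1 e.1.2) ≤
        ENNReal.ofReal τ * (F e.1.1 e.1.2 + F e.1.2 e.1.1) := by
    rintro ⟨⟨i, j⟩, hij⟩
    have hwij := hw i j hij
    have hwji := hw j i (hE i j hij)
    rw [← ENNReal.ofReal_add (by positivity) (by positivity),
      ← ENNReal.ofReal_mul (by positivity), abs_sub_comm (f j), ← hwsymm i j hij]
    refine ENNReal.ofReal_le_ofReal ?_
    calc |(|f i| ^ τ - |f j| ^ τ)| * w i j
        ≤ τ * (|f i| ^ (τ - 1) + |f j| ^ (τ - 1)) * |f i - f j| * w i j := by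
          gcongr
          exact Real.abs_abs_rpow_sub_abs_rpow_le hτ (f i) (f j)
      _ = _ := by ring
  calc _ ≤ ∑' e : {q : V × V // E q.1 q.2}, ENNReal.ofReal τ * (F e.1.1 e.1.2 + F e.1.2 e.1.1) :=
        ENNReal.tsum_le_tsum hpoint
    _ = 2 * ENNReal.ofReal τ * ∑' e : {q : V × V // E q.1 q.2}, F e.1.1 e.1.2 := by
        rw [ENNReal.tsum_mul_left, ENNReal.tsum_add, tsum_edge_swap hE F]
        ring

lemma tsum_edge_abs_rpow_sub_le_holder (hE : ∀ i j, E i j → E j i) {w : V → V → ℝ}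
    (hw : ∀ i j, E i j → 0 ≤ w i j) (hwsymm : ∀ i j, E i j → w i j = w j i) {τ : ℝ}
    (hτ : 1 ≤ τ) (f : V → ℝ) :
    ∑' e : {q : V × V // E q.1 q.2},
        ENNReal.ofReal (|(|f e.1.1| ^ τ - |f e.1.2| ^ τ)| * w e.1.1 e.1.2) ≤
      2 * ENNReal.ofReal τ *
        ((∑' e : {q : V × V // E q.1 q.2}, ENNReal.ofReal (|f e.1.1| ^ τ * w e.1.1 e.1.2)) ^
            (1 - 1 / τ) *
          (∑' e : {q : V × V // E q.1 q.2},
            ENNReal.ofReal (|f e.1.1 - f e.1.2| ^ τ * w e.1.1 e.1.2)) ^ (1 / τ)) := by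
  refine (tsum_edge_abs_rpow_sub_le_two_mul hE hw hwsymm hτ f).trans ?_
  gcongr
  calc _ = ∑' e : {q : V × V // E q.1 q.2},
        ENNReal.ofReal (|f e.1.1| ^ τ * w e.1.1 e.1.2) ^ (1 - 1 / τ) *
          ENNReal.ofReal (|f e.1.1 - f e.1.2| ^ τ * w e.1.1 e.1.2) ^ (1 / τ) :=
        tsum_congr fun e => ENNReal.ofReal_rpow_sub_one_mul_mul hτ (abs_nonneg _)
          (abs_nonneg _) (hw _ _ e.2)
    _ ≤ _ := ENNReal.tsum_rpow_mul_rpow_le _ _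
        (sub_nonneg.2 ((div_le_one (by positivity)).2 hτ)) (by positivity) (by ring)

end WeightedGraph

theorem discrete_poincare_upgrade_general
    (V : Type) [Countable V] (E : V → V → Prop)
    (hEsymm : ∀ i j, E i j → E j i)
    (wV : V → ℝ)
    (wE : V → V → ℝ) (hwE : ∀ i j, E i j → 0 < wE i j)
    (hwEsymm : ∀ i j, E i j → wE i j = wE j i)
    (A B : ℝ) (hA : 1 ≤ A) (hB : 1 ≤ B)
    (hdegfin : ∀ i, {j : V | E i j}.Finite)
    (hdeg : ∀ i, (Nat.card {j : V | E i j} : ℝ) ≤ A)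
    (hwEB : ∀ i j, E i j → wE i j ≤ B * wV i)
    (C : ℝ) (hC : 0 < C)
    (h1 : ∀ f : V → ℝ, (Function.support f).Finite →
      ∑' i : V, ENNReal.ofReal (|f i| * wV i) ≤
        ENNReal.ofReal C *
          ∑' e : {q : V × V // E q.1 q.2},
            ENNReal.ofReal (|f e.1.1 - f e.1.2| * wE e.1.1 e.1.2))
    (τ : ℝ) (hτ : 1 ≤ τ) :
    ∀ f : V → ℝ, (Function.support f).Finite →
      (∑' i : V, ENNReal.ofReal (|f i| ^ τ * wV i)) ^ (1 / τ) ≤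
        ENNReal.ofReal (2 * C * τ * (A * B) ^ (1 - 1 / τ)) *
          (∑' e : {q : V × V // E q.1 q.2},
            ENNReal.ofReal (|f e.1.1 - f e.1.2| ^ τ * wE e.1.1 e.1.2)) ^ (1 / τ) := by
  intro f hf
  have hτ0 : 0 < τ := by linarith
  have hθ : 0 ≤ 1 - 1 / τ := sub_nonneg.2 ((div_le_one hτ0).2 hτ)
  have hwE' : ∀ i j, E i j → 0 ≤ wE i j := fun i j h => (hwE i j h).le
  have hpow : (Function.support fun i => |f i| ^ τ).Finite :=
    hf.subset fun i hi hfi => hi (by simp [hfi, Real.zero_rpow hτ0.ne'])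
  set S := ∑' i, ENNReal.ofReal (|f i| ^ τ * wV i)
  set T := ∑' e : {q : V × V // E q.1 q.2},
    ENNReal.ofReal (|f e.1.1 - f e.1.2| ^ τ * wE e.1.1 e.1.2)
  have hS : S ≠ ⊤ := ENNReal.tsum_ofReal_ne_top_of_finite_support
    (hpow.subset (Function.support_mul_subset_left _ _))
  have hK : ENNReal.ofReal (2 * C * τ * (A * B) ^ (1 - 1 / τ)) =
      ENNReal.ofReal C * (2 * ENNReal.ofReal τ *
        (ENNReal.ofReal A * ENNReal.ofReal B) ^ (1 - 1 / τ)) := by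
    rw [ENNReal.ofReal_mul (by positivity), ENNReal.ofReal_mul (by positivity),
      ENNReal.ofReal_mul zero_le_two, ENNReal.ofReal_ofNat,
      ← ENNReal.ofReal_rpow_of_nonneg (by positivity) hθ, ENNReal.ofReal_mul (by linarith)]
    ring
  refine ENNReal.rpow_le_of_le_mul_rpow_one_sub (by positivity) hS ?_
  calc S ≤ ENNReal.ofReal C * ∑' e : {q : V × V // E q.1 q.2},
          ENNReal.ofReal (|(|f e.1.1| ^ τ - |f e.1.2| ^ τ)| * wE e.1.1 e.1.2) := by
        simpa only [abs_of_nonneg (Real.rpow_nonneg (abs_nonneg _) _)] using h1 _ hpow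
    _ ≤ ENNReal.ofReal C * (2 * ENNReal.ofReal τ *
          ((ENNReal.ofReal A * ENNReal.ofReal B * S) ^ (1 - 1 / τ) * T ^ (1 / τ))) := by
        gcongr
        refine (tsum_edge_abs_rpow_sub_le_holder hEsymm hwE' hwEsymm hτ f).trans ?_
        gcongr
        exact tsum_edge_ofReal_mul_le hdegfin hdeg (by linarith) hwEB
          fun i => Real.rpow_nonneg (abs_nonneg _) _
    _ = ENNReal.ofReal (2 * C * τ * (A * B) ^ (1 - 1 / τ)) * T ^ (1 / τ) * S ^ (1 - 1 / τ) := by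
        rw [hK, ENNReal.mul_rpow_of_nonneg _ _ hθ]
        ring

/-- The discrete 1-Poincaré inequality upgrades to a discrete τ-Poincaré
inequality with constant `2Cτ(AB)^{1-1/τ}`. -/
theorem discrete_poincare_upgrade
    (V : Type) [Countable V] (E : V → V → Prop)
    (hEsymm : ∀ i j, E i j → E j i)
    (wV : V → ℝ) (hwV : ∀ i, 0 < wV i)
    (wE : V → V → ℝ) (hwE : ∀ i j, E i j → 0 < wE i j)
    (hwEsymm : ∀ i j, E i j → wE i j = wE j i)
    (A B : ℝ) (hA : 1 ≤ A) (hB : 1 ≤ B)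
    (hdegfin : ∀ i, {j : V | E i j}.Finite)
    (hdeg : ∀ i, (Nat.card {j : V | E i j} : ℝ) ≤ A)
    (hwEB : ∀ i j, E i j → wE i j ≤ B * wV i)
    (C : ℝ) (hC : 0 < C)
    (h1 : ∀ f : V → ℝ, (Function.support f).Finite →
      ∑' i : V, ENNReal.ofReal (|f i| * wV i) ≤
        ENNReal.ofReal C *
          ∑' e : {q : V × V // E q.1 q.2},
            ENNReal.ofReal (|f e.1.1 - f e.1.2| * wE e.1.1 e.1.2))
    (τ : ℝ) (hτ : 1 ≤ τ) :
    ∀ f : V → ℝ, (Function.support f).Finite →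
      (∑' i : V, ENNReal.ofReal (|f i| ^ τ * wV i)) ^ (1 / τ) ≤
        ENNReal.ofReal (2 * C * τ * (A * B) ^ (1 - 1 / τ)) *
          (∑' e : {q : V × V // E q.1 q.2},
            ENNReal.ofReal (|f e.1.1 - f e.1.2| ^ τ * wE e.1.1 e.1.2)) ^ (1 / τ) :=
  discrete_poincare_upgrade_general V E hEsymm wV wE hwE hwEsymm A B hA hB hdegfin hdeg hwEB C hC h1
    τ hτ
end
end

section
/- Let (V,E,μ) be a finite connected weighted graph with N ≥ 2 vertices, and suppose there are K > 1 and L > 0 with K⁻¹L ≤ μ(i) ≤ KL for every vertex i and K⁻¹L ≤ μ(i,j) ≤ KL for every edge (i,j). Then for every s ≥ 1 and every f : V → ℝ: Σ_{i∈V} |f(i) − μ(f)|^s μ(i) ≤ 2^s N(N−1)^{s−1} K² Σ_{(i,j)∈E} |f(i) − f(j)|^s μ(i,j), where μ(f) := μ(V)⁻¹ Σ_{i∈V} f(i) μ(i) and μ(V) := Σ_{i∈V} μ(i). -/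
open MeasureTheory Metric Set Filter
open scoped ENNReal NNReal Topology

noncomputable section

/-!
The weighted mean of `f` lies between its extreme values, so `|f i - μ(f)| ≤ |f i - f j|` for
some vertex `j`. Joining `i` to `j` by a path, which has at most `N - 1` edges, the triangle
inequality and the power-mean inequality give
`|f i - f j| ^ s ≤ (N - 1) ^ (s - 1) ∑_{path edges} |f a - f b| ^ s`.
Each path edge `{a, b}` is counted in the energy as `E a b` or as `E b a`, which costs a factor
`2 ≤ 2 ^ s`, and the comparability of the weights with `L` costs `K²`.
-/

open Finset

lemma exists_abs_sub_weightedMean_le {ι : Type*} [Fintype ι] (w y : ι → ℝ)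
    (hw : ∀ j, 0 ≤ w j) (hW : 0 < ∑ j, w j) (x : ℝ) :
    ∃ j, |x - (∑ j, w j)⁻¹ * ∑ j, y j * w j| ≤ |x - y j| := by
  obtain ⟨j₀, -, hj₀⟩ := exists_max_image univ (fun j => |x - y j|)
    (nonempty_of_sum_ne_zero hW.ne')
  refine ⟨j₀, le_of_mul_le_mul_left ?_ hW⟩
  have hdev : (∑ j, w j) * (x - (∑ j, w j)⁻¹ * ∑ j, y j * w j) = ∑ j, (x - y j) * w j := by
    simp only [sub_mul, sum_sub_distrib, ← mul_sum]
    field_simp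
  calc (∑ j, w j) * |x - (∑ j, w j)⁻¹ * ∑ j, y j * w j|
      = |∑ j, (x - y j) * w j| := by rw [← hdev, abs_mul, abs_of_pos hW]
    _ ≤ ∑ j, |x - y j| * w j := by
        refine (abs_sum_le_sum_abs _ _).trans_eq (sum_congr rfl fun j _ => ?_)
        rw [abs_mul, abs_of_nonneg (hw j)]
    _ ≤ ∑ j, |x - y j₀| * w j :=
        sum_le_sum fun j hj => mul_le_mul_of_nonneg_right (hj₀ j hj) (hw j)
    _ = (∑ j, w j) * |x - y j₀| := by rw [← mul_sum, mul_comm]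

lemma sum_rpow_abs_sub_weightedMean_mul_le {ι : Type*} [Fintype ι] (w y : ι → ℝ) {s C M : ℝ}
    (hs : 0 ≤ s) (hw : ∀ i, 0 < w i) (hwM : ∀ i, w i ≤ M) (hosc : ∀ i j, |y i - y j| ^ s ≤ C) :
    ∑ i, |y i - (∑ j, w j)⁻¹ * ∑ j, y j * w j| ^ s * w i ≤ Fintype.card ι * (C * M) := by
  calc _ ≤ ∑ _i : ι, C * M := sum_le_sum fun i _ => ?_
    _ = _ := by rw [sum_const, card_univ, nsmul_eq_mul]
  have : Nonempty ι := ⟨i⟩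
  obtain ⟨j, hj⟩ := exists_abs_sub_weightedMean_le w y (fun j => (hw j).le)
    (sum_pos (fun j _ => hw j) univ_nonempty) (y i)
  have hmean : |y i - (∑ j, w j)⁻¹ * ∑ j, y j * w j| ^ s ≤ C := by
    grw [hj]
    exact hosc i j
  exact mul_le_mul hmean (hwM i) (hw i).le (le_trans (by positivity) hmean)

lemma SimpleGraph.reachable_fromRel_of_reflTransGen {V : Type*} {r : V → V → Prop} {u v : V}
    (h : Relation.ReflTransGen r u v) : (SimpleGraph.fromRel r).Reachable u v := by
  rw [SimpleGraph.reachable_iff_reflTransGen]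
  refine Relation.ReflTransGen.lift' id (fun a b hab => ?_) u v h
  rcases eq_or_ne a b with rfl | hne
  · exact .refl
  · exact .single ((SimpleGraph.fromRel_adj r a b).2 ⟨hne, .inl hab⟩)

namespace SimpleGraph.Walk

variable {V : Type*} {G : SimpleGraph V}

lemma abs_sub_le_sum_darts (f : V → ℝ) {i j : V} (p : G.Walk i j) :
    |f i - f j| ≤ (p.darts.map fun d => |f d.fst - f d.snd|).sum := by
  induction p with
  | nil => simp
  | cons _ q ih =>
    rw [darts_cons, List.map_cons, List.sum_cons]
    exact (abs_sub_le _ (f _) _).trans (by gcongr)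

lemma IsPath.rpow_abs_sub_le [Fintype V] [DecidableEq V] (f : V → ℝ) {s : ℝ} (hs : 1 ≤ s) {i j : V}
    {p : G.Walk i j} (hp : p.IsPath) :
    |f i - f j| ^ s ≤
      ((Fintype.card V : ℝ) - 1) ^ (s - 1) * ∑ d ∈ p.darts.toFinset, |f d.fst - f d.snd| ^ s := by
  have hnodup : p.darts.Nodup := darts_nodup_of_support_nodup hp.support_nodup
  have hcard : (#p.darts.toFinset : ℝ) ≤ Fintype.card V - 1 := by
    rw [List.toFinset_card_of_nodup hnodup, length_darts, le_sub_iff_add_le]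
    exact_mod_cast hp.length_lt
  calc |f i - f j| ^ s ≤ (∑ d ∈ p.darts.toFinset, |f d.fst - f d.snd|) ^ s := by
        rw [List.sum_toFinset _ hnodup]
        gcongr
        exact p.abs_sub_le_sum_darts f
    _ ≤ (#p.darts.toFinset : ℝ) ^ (s - 1) * ∑ d ∈ p.darts.toFinset, |f d.fst - f d.snd| ^ s :=
        Real.rpow_sum_le_const_mul_sum_rpow _ _ hs
    _ ≤ _ := by gcongr

end SimpleGraph.Walk

lemma sum_darts_fromRel_le {V : Type*} [Fintype V] (E : V → V → Prop) [DecidableRel E]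
    (g : V → V → ℝ) (hg : ∀ a b, 0 ≤ g a b) (hg_symm : ∀ a b, g a b = g b a)
    (t : Finset (SimpleGraph.fromRel E).Dart) :
    ∑ d ∈ t, g d.fst d.snd ≤ 2 * ∑ a, ∑ b, if E a b then g a b else 0 := by
  let h : V × V → ℝ := fun x =>
    (if E x.1 x.2 then g x.1 x.2 else 0) + if E x.2 x.1 then g x.2 x.1 else 0
  have hite : ∀ a b, 0 ≤ if E a b then g a b else 0 := fun a b => by split_ifs <;> simp [hg]
  have hh : ∀ x, 0 ≤ h x := fun x => add_nonneg (hite _ _) (hite _ _)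
  calc ∑ d ∈ t, g d.fst d.snd ≤ ∑ d ∈ t, h d.toProd := by
        refine sum_le_sum fun d _ => ?_
        obtain ⟨-, hE | hE⟩ := (SimpleGraph.fromRel_adj E _ _).1 d.adj
        · calc g d.fst d.snd = if E d.fst d.snd then g d.fst d.snd else 0 := (if_pos hE).symm
            _ ≤ h d.toProd := le_add_of_nonneg_right (hite _ _)
        · calc g d.fst d.snd = if E d.snd d.fst then g d.snd d.fst else 0 := by
                rw [if_pos hE, hg_symm]
            _ ≤ h d.toProd := le_add_of_nonneg_left (hite _ _)
    _ = ∑ x ∈ t.map ⟨_, SimpleGraph.Dart.toProd_injective⟩, h x := by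
        rw [sum_map]; rfl
    _ ≤ ∑ x, h x := sum_le_univ_sum_of_nonneg hh
    _ = 2 * ∑ a, ∑ b, if E a b then g a b else 0 := by
        rw [Fintype.sum_prod_type]
        simp only [h, sum_add_distrib]
        rw [sum_comm (f := fun a b => if E b a then g b a else 0)]
        ring

lemma rpow_abs_sub_le_of_reflTransGen {V : Type*} [Fintype V] (E : V → V → Prop)
    [DecidableRel E] (f : V → ℝ) {s : ℝ} (hs : 1 ≤ s) {i j : V}
    (hij : Relation.ReflTransGen E i j) :
    |f i - f j| ^ s ≤
      2 * ((Fintype.card V : ℝ) - 1) ^ (s - 1) *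
        ∑ a, ∑ b, if E a b then |f a - f b| ^ s else 0 := by
  classical
  obtain ⟨p⟩ := SimpleGraph.reachable_fromRel_of_reflTransGen hij
  have hN : (0 : ℝ) ≤ Fintype.card V - 1 := by
    rw [sub_nonneg, Nat.one_le_cast]
    exact Fintype.card_pos_iff.2 ⟨i⟩
  calc |f i - f j| ^ s
      ≤ ((Fintype.card V : ℝ) - 1) ^ (s - 1) *
          ∑ d ∈ p.toPath.1.darts.toFinset, |f d.fst - f d.snd| ^ s :=
        p.toPath.2.rpow_abs_sub_le f hs
    _ ≤ ((Fintype.card V : ℝ) - 1) ^ (s - 1) *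
          (2 * ∑ a, ∑ b, if E a b then |f a - f b| ^ s else 0) := by
        gcongr
        exact sum_darts_fromRel_le E (fun a b => |f a - f b| ^ s) (fun _ _ => by positivity)
          (fun a b => by rw [abs_sub_comm]) _
    _ = _ := by ring

lemma finsum_rel_eq_sum_ite {V : Type*} [Fintype V] (E : V → V → Prop) [DecidableRel E]
    (F : V → V → ℝ) :
    ∑ᶠ (i : V) (j : V) (_ : E i j), F i j = ∑ i, ∑ j, if E i j then F i j else 0 := by
  simp only [finsum_eq_sum_of_fintype, finsum_eq_if]

lemma mul_sum_ite_le_sum_ite_mul {V : Type*} [Fintype V] (E : V → V → Prop) [DecidableRel E]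
    (F w : V → V → ℝ) {c : ℝ} (hF : ∀ i j, 0 ≤ F i j) (hw : ∀ i j, E i j → c ≤ w i j) :
    c * ∑ i, ∑ j, (if E i j then F i j else 0) ≤ ∑ i, ∑ j, if E i j then F i j * w i j else 0 := by
  simp only [mul_sum]
  refine sum_le_sum fun i _ => sum_le_sum fun j _ => ?_
  split_ifs with hE
  · rw [mul_comm]
    exact mul_le_mul_of_nonneg_left (hw i j hE) (hF i j)
  · rw [mul_zero]

theorem finite_graph_poincare_neumann_general
    (V : Type) [Fintype V] (E : V → V → Prop)
    (hconn : ∀ i j : V, Relation.ReflTransGen E i j)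
    (wV : V → ℝ) (wE : V → V → ℝ)
    (K L : ℝ) (hK : 1 < K) (hL : 0 < L)
    (hwV : ∀ i, K⁻¹ * L ≤ wV i ∧ wV i ≤ K * L)
    (hwE : ∀ i j, E i j → K⁻¹ * L ≤ wE i j ∧ wE i j ≤ K * L)
    (s : ℝ) (hs : 1 ≤ s) (f : V → ℝ) :
    ∑ i : V, |f i - (∑ j : V, wV j)⁻¹ * ∑ j : V, f j * wV j| ^ s * wV i ≤
      (2 : ℝ) ^ s * (Fintype.card V : ℝ) * ((Fintype.card V : ℝ) - 1) ^ (s - 1) * K ^ 2 *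
        ∑ᶠ (i : V) (j : V) (_ : E i j), |f i - f j| ^ s * wE i j := by
  classical
  obtain _ | _ := isEmpty_or_nonempty V
  · simp
  have hK₀ : 0 < K := one_pos.trans hK
  have hpow : (0 : ℝ) ≤ ((Fintype.card V : ℝ) - 1) ^ (s - 1) :=
    Real.rpow_nonneg (sub_nonneg.2 (Nat.one_le_cast.2 Fintype.card_pos)) _
  set S := ∑ a, ∑ b, if E a b then |f a - f b| ^ s else 0
  have hS : 0 ≤ S := sum_nonneg fun a _ => sum_nonneg fun b _ => by split_ifs <;> positivity
  have hmean := sum_rpow_abs_sub_weightedMean_mul_le wV f (by linarith)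
    (fun i => (by positivity : 0 < K⁻¹ * L).trans_le (hwV i).1) (fun i => (hwV i).2)
    (fun i j => rpow_abs_sub_le_of_reflTransGen E f hs (hconn i j))
  have henergy := mul_sum_ite_le_sum_ite_mul E (fun i j => |f i - f j| ^ s) wE
    (fun _ _ => by positivity) (fun i j hE => (hwE i j hE).1)
  have h2 : (2 : ℝ) ≤ 2 ^ s := by simpa using Real.rpow_le_rpow_of_exponent_le one_le_two hs
  rw [finsum_rel_eq_sum_ite]
  calc _ ≤ Fintype.card V * (2 * ((Fintype.card V : ℝ) - 1) ^ (s - 1) * S * (K * L)) := hmean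
    _ = 2 * Fintype.card V * ((Fintype.card V : ℝ) - 1) ^ (s - 1) * K ^ 2 * (K⁻¹ * L * S) := by
        field_simp
    _ ≤ _ := by gcongr

/-- Discrete s Poincaré–Neumann inequality on a finite connected weighted graph
with comparable weights. -/
theorem finite_graph_poincare_neumann
    (V : Type) [Fintype V] (E : V → V → Prop)
    (hEsymm : ∀ i j, E i j → E j i)
    (hconn : ∀ i j : V, Relation.ReflTransGen E i j)
    (hN : 2 ≤ Fintype.card V)
    (wV : V → ℝ) (wE : V → V → ℝ)
    (hwEsymm : ∀ i j, E i j → wE i j = wE j i)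
    (K L : ℝ) (hK : 1 < K) (hL : 0 < L)
    (hwV : ∀ i, K⁻¹ * L ≤ wV i ∧ wV i ≤ K * L)
    (hwE : ∀ i j, E i j → K⁻¹ * L ≤ wE i j ∧ wE i j ≤ K * L)
    (s : ℝ) (hs : 1 ≤ s) (f : V → ℝ) :
    ∑ i : V, |f i - (∑ j : V, wV j)⁻¹ * ∑ j : V, f j * wV j| ^ s * wV i ≤
      (2 : ℝ) ^ s * (Fintype.card V : ℝ) * ((Fintype.card V : ℝ) - 1) ^ (s - 1) * K ^ 2 *
        ∑ᶠ (i : V) (j : V) (_ : E i j), |f i - f j| ^ s * wE i j :=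
  finite_graph_poincare_neumann_general V E hconn wV wE K L hK hL hwV hwE s hs f
end
end

section
/- Let (X,d) be a geodesic metric space and m a Borel measure on X, finite and nonzero on balls of finite nonzero radius, which is globally doubling with constant C_D ≥ 1; set Q := log₂ C_D. Then for every o ∈ X, every κ > 1 and every i ∈ ℤ, the family of connected components of the open annulus A(o,κ^{i−1},κ^i) := B_{κ^i}(o) ∖ cl(B_{κ^{i−1}}(o)) whose closure meets the sphere S_{κ^i}(o) := {x : d(o,x) = κ^i} is finite, of cardinality at most 2^Q (8κ/(κ−1))^Q. -/
open MeasureTheory Metric Set Filter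
open scoped ENNReal NNReal Topology

noncomputable section

section AnnulusAux

variable {X : Type*} [MetricSpace X]

/-- On a geodesic between `x` and `y`, the point at parameter `t` is at distance exactly `t`
from `x`. -/
lemma exists_geodesic_dist (hgeo : IsGeodesicSpace X) (x y : X) :
    ∃ γ : ℝ → X, γ 0 = x ∧ γ (dist x y) = y ∧ LipschitzOnWith 1 γ (Icc 0 (dist x y)) ∧
      ∀ t ∈ Icc (0 : ℝ) (dist x y), dist x (γ t) = t := by
  obtain ⟨γ, h0, hL, hlip⟩ := hgeo x y
  refine ⟨γ, h0, hL, hlip, fun t ht => ?_⟩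
  have ht0 : (0 : ℝ) ≤ t := ht.1
  have htL : t ≤ dist x y := ht.2
  have h1 : dist (γ 0) (γ t) ≤ 1 * dist (0 : ℝ) t :=
    hlip.dist_le_mul 0 ⟨le_refl 0, dist_nonneg⟩ t ht
  have h2 : dist (γ t) (γ (dist x y)) ≤ 1 * dist t (dist x y) :=
    hlip.dist_le_mul t ht (dist x y) ⟨dist_nonneg, le_refl _⟩
  rw [Real.dist_eq, one_mul, abs_sub_comm, sub_zero, abs_of_nonneg ht0, h0] at h1
  rw [Real.dist_eq, one_mul, abs_sub_comm, abs_of_nonneg (by linarith : 0 ≤ dist x y - t),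
    hL] at h2
  have h3 : dist x y ≤ dist x (γ t) + dist (γ t) y := dist_triangle _ _ _
  exact le_antisymm h1 (by linarith)

/-- Balls in a geodesic space are preconnected. -/
lemma isPreconnected_ball_of_geodesic (hgeo : IsGeodesicSpace X) (p : X) (r : ℝ) :
    IsPreconnected (ball p r) := by
  apply isPreconnected_of_forall p
  intro y hy
  obtain ⟨γ, h0, hL, hlip, hd⟩ := exists_geodesic_dist hgeo p y
  refine ⟨γ '' Icc 0 (dist p y), ?_, ⟨0, ⟨le_refl 0, dist_nonneg⟩, h0⟩,
    ⟨dist p y, ⟨dist_nonneg, le_refl _⟩, hL⟩, isPreconnected_Icc.image _ hlip.continuousOn⟩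
  rintro _ ⟨t, ht, rfl⟩
  have := hd t ht
  rw [mem_ball, dist_comm, this]
  exact lt_of_le_of_lt ht.2 (by rwa [mem_ball, dist_comm] at hy)

/-- Iterated doubling. -/
lemma doubling_iter {X : Type*} [MetricSpace X] [MeasurableSpace X]
    (m : Measure X) (Q : ℝ) (hdb : DoublingOfDim m Q) (x : X) (r : ℝ) (hr : 0 < r) :
    ∀ k : ℕ, m (ball x ((2 : ℝ) ^ k * r)) ≤ ENNReal.ofReal ((2 : ℝ) ^ Q) ^ k * m (ball x r)
  | 0 => by simp
  | (k + 1) => by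
    have h1 : (2 : ℝ) ^ (k + 1) * r = 2 * ((2 : ℝ) ^ k * r) := by ring
    have h2 : (0 : ℝ) < (2 : ℝ) ^ k * r := by positivity
    calc m (ball x ((2 : ℝ) ^ (k + 1) * r)) = m (ball x (2 * ((2 : ℝ) ^ k * r))) := by rw [h1]
      _ ≤ ENNReal.ofReal ((2 : ℝ) ^ Q) * m (ball x ((2 : ℝ) ^ k * r)) := hdb x _ h2
      _ ≤ ENNReal.ofReal ((2 : ℝ) ^ Q) *
          (ENNReal.ofReal ((2 : ℝ) ^ Q) ^ k * m (ball x r)) :=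
        mul_le_mul_right (doubling_iter m Q hdb x r hr k) _
      _ = ENNReal.ofReal ((2 : ℝ) ^ Q) ^ (k + 1) * m (ball x r) := by ring

end AnnulusAux

/-- Key lemma: on a geodesic doubling space, the number of connected components
of a dyadic-type annulus whose closure meets the outer sphere is bounded by
`2^Q (8κ/(κ-1))^Q`. -/
theorem annulus_components_card_le
    (X : Type*) [MetricSpace X] [MeasurableSpace X] [BorelSpace X]
    (hgeo : IsGeodesicSpace X)
    (m : Measure X) (hm : BallRegular m)
    (Q : ℝ) (hQ : 0 ≤ Q) (hdb : DoublingOfDim m Q)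
    (o : X) (κ : ℝ) (hκ : 1 < κ) (i : ℤ) :
    {C : Set X |
        ∃ x ∈ ball o (κ ^ i) \ closure (ball o (κ ^ (i - 1))),
          C = connectedComponentIn (ball o (κ ^ i) \ closure (ball o (κ ^ (i - 1)))) x ∧
            (closure C ∩ sphere o (κ ^ i)).Nonempty}.Finite ∧
      (Nat.card {C : Set X |
        ∃ x ∈ ball o (κ ^ i) \ closure (ball o (κ ^ (i - 1))),
          C = connectedComponentIn (ball o (κ ^ i) \ closure (ball o (κ ^ (i - 1)))) x ∧
            (closure C ∩ sphere o (κ ^ i)).Nonempty} : ℝ) ≤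
        (2 : ℝ) ^ Q * (8 * κ / (κ - 1)) ^ Q :=  by
  classical
  have hκ0 : (0 : ℝ) < κ := lt_trans one_pos hκ
  have hκ1 : (0 : ℝ) < κ - 1 := by linarith
  set R := κ ^ i with hRdef
  set ρ := κ ^ (i - 1) with hρdef
  have hRpos : 0 < R := zpow_pos hκ0 i
  have hρpos : 0 < ρ := zpow_pos hκ0 _
  have hρR : ρ < R := zpow_lt_zpow_right₀ hκ (by omega)
  have hρeq : ρ = R / κ := by
    rw [hρdef, hRdef, zpow_sub_one₀ (ne_of_gt hκ0), ← div_eq_mul_inv]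
  set t₀ : ℝ := (ρ + R) / 2 with ht₀def
  set r : ℝ := (R - ρ) / 2 with hrdef
  have hr : 0 < r := by rw [hrdef]; linarith
  have ht₀ρ : ρ < t₀ := by rw [ht₀def]; linarith
  have ht₀R : t₀ < R := by rw [ht₀def]; linarith
  have ht₀0 : 0 ≤ t₀ := by linarith
  set ann := ball o R \ closure (ball o ρ) with hanndef
  have hdistmem : ∀ y : X, ρ < dist o y → dist o y < R → y ∈ ann := by
    intro y h1 h2
    refine ⟨mem_ball'.2 h2, fun hc => ?_⟩
    have := closure_ball_subset_closedBall hc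
    rw [mem_closedBall'] at this
    linarith
  have hannR : ann ⊆ ball o R := diff_subset
  have hballsub : ∀ p : X, dist o p = t₀ → ball p r ⊆ ann := by
    intro p hp y hy
    have hpy : dist p y < r := by rwa [mem_ball, dist_comm] at hy
    have h1 : dist o y ≤ dist o p + dist p y := dist_triangle _ _ _
    have h2 : dist o p ≤ dist o y + dist y p := dist_triangle _ _ _
    rw [dist_comm y p] at h2
    apply hdistmem <;> rw [ht₀def] at hp <;> rw [hrdef] at hpy <;> linarith
  set 𝒮 := {C : Set X | ∃ x ∈ ann, C = connectedComponentIn ann x ∧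
      (closure C ∩ sphere o R).Nonempty} with h𝒮def
  rcases Set.eq_empty_or_nonempty 𝒮 with h𝒮e | h𝒮ne
  · refine ⟨by rw [h𝒮e]; exact Set.finite_empty, ?_⟩
    rw [h𝒮e]
    simp only [Nat.card_coe_set_eq, Set.ncard_empty, Nat.cast_zero]
    exact mul_nonneg (Real.rpow_nonneg (by norm_num) Q)
      (Real.rpow_nonneg (div_nonneg (by linarith) (by linarith)) Q)
  obtain ⟨C₀, x₀, hx₀, -, -⟩ := h𝒮ne
  haveI : Nonempty X := ⟨x₀⟩
  -- choose a point at distance t₀ in each component, whose r-ball is inside the component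
  have hpick : ∀ C ∈ 𝒮, ∃ p : X, dist o p = t₀ ∧ ball p r ⊆ C := by
    rintro C ⟨x, hx, rfl, z, hzC, hzS⟩
    have hz : dist o z = R := by rw [dist_comm]; exact hzS
    obtain ⟨q, hqC, hqz⟩ := Metric.mem_closure_iff.1 hzC (R - t₀) (by linarith)
    have hq_ann : q ∈ ann := connectedComponentIn_subset _ _ hqC
    have hLR : dist o q < R := mem_ball'.1 (hannR hq_ann)
    have hLt₀ : t₀ < dist o q := by
      have h1 : dist o z ≤ dist o q + dist q z := dist_triangle _ _ _
      rw [dist_comm q z] at h1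
      linarith [hz ▸ h1]
    obtain ⟨γ, h0, hγL, hlip, hd⟩ := exists_geodesic_dist hgeo o q
    have hmemt₀ : t₀ ∈ Icc (0 : ℝ) (dist o q) := ⟨ht₀0, hLt₀.le⟩
    have hpdist : dist o (γ t₀) = t₀ := hd t₀ hmemt₀
    refine ⟨γ t₀, hpdist, ?_⟩
    have hseg_sub : γ '' Icc t₀ (dist o q) ⊆ ann := by
      rintro _ ⟨t, ⟨ht1, ht2⟩, rfl⟩
      have := hd t ⟨le_trans ht₀0 ht1, ht2⟩
      exact hdistmem _ (by rw [this]; linarith) (by rw [this]; linarith)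
    have hseg_pre : IsPreconnected (γ '' Icc t₀ (dist o q)) :=
      isPreconnected_Icc.image _ (hlip.continuousOn.mono (Icc_subset_Icc ht₀0 le_rfl))
    have hq_mem : q ∈ γ '' Icc t₀ (dist o q) := ⟨dist o q, ⟨hLt₀.le, le_rfl⟩, hγL⟩
    have hsub := hseg_pre.subset_connectedComponentIn hq_mem hseg_sub
    have hp_mem : γ t₀ ∈ connectedComponentIn ann q := hsub ⟨t₀, ⟨le_rfl, hLt₀.le⟩, rfl⟩
    have hCq : connectedComponentIn ann x = connectedComponentIn ann q :=
      connectedComponentIn_eq hqC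
    have hpC : γ t₀ ∈ connectedComponentIn ann x := hCq ▸ hp_mem
    rw [connectedComponentIn_eq hpC]
    exact (isPreconnected_ball_of_geodesic hgeo _ _).subset_connectedComponentIn
      (mem_ball_self hr) (hballsub _ hpdist)
  choose! P hP1 hP2 using hpick
  -- disjointness of the chosen balls
  have hdisj : ∀ C₁ ∈ 𝒮, ∀ C₂ ∈ 𝒮, C₁ ≠ C₂ →
      Disjoint (ball (P C₁) r) (ball (P C₂) r) := by
    intro C₁ h₁ C₂ h₂ hne
    have hCC : Disjoint C₁ C₂ := by
      obtain ⟨x₁, hx₁, rfl, -⟩ := h₁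
      obtain ⟨x₂, hx₂, rfl, -⟩ := h₂
      by_contra h
      obtain ⟨w, hw₁, hw₂⟩ := Set.not_disjoint_iff.1 h
      exact hne ((connectedComponentIn_eq hw₁).trans (connectedComponentIn_eq hw₂).symm)
    exact hCC.mono (hP2 _ h₁) (hP2 _ h₂)
  -- choose the doubling scale
  set B : ℝ := 4 * κ / (κ - 1) with hBdef
  have hBpos : 0 < B := by positivity
  have hB1 : 1 ≤ B := by rw [hBdef, le_div_iff₀ hκ1]; linarith
  set k : ℕ := ⌈Real.logb 2 B⌉₊ with hkdef
  have h2k : B ≤ (2 : ℝ) ^ k := by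
    calc B = 2 ^ Real.logb 2 B := (Real.rpow_logb two_pos (by norm_num) hBpos).symm
      _ ≤ (2 : ℝ) ^ (k : ℝ) := Real.rpow_le_rpow_of_exponent_le one_le_two (Nat.le_ceil _)
      _ = (2 : ℝ) ^ k := Real.rpow_natCast 2 k
  have h2kr : 2 * R ≤ (2 : ℝ) ^ k * r := by
    have h1 : B * r ≤ (2 : ℝ) ^ k * r := mul_le_mul_of_nonneg_right h2k hr.le
    have h2 : B * r = 2 * R := by
      rw [hBdef, hrdef, hρeq]
      field_simp
      ring
    linarith
  set D : ℝ≥0∞ := ENNReal.ofReal ((2 : ℝ) ^ Q) ^ k with hDdef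
  have hDne : D ≠ ⊤ := by
    rw [hDdef]
    exact ENNReal.pow_ne_top ENNReal.ofReal_ne_top
  have hMball : ∀ p : X, dist o p = t₀ → m (ball o R) ≤ D * m (ball p r) := by
    intro p hp
    have hsub : ball o R ⊆ ball p ((2 : ℝ) ^ k * r) := by
      intro y hy
      rw [mem_ball] at hy ⊢
      have h1 : dist y p ≤ dist y o + dist o p := dist_triangle _ _ _
      rw [hp] at h1
      linarith
    exact le_trans (measure_mono hsub) (doubling_iter m Q hdb p r hr k)
  have hM0 : m (ball o R) ≠ 0 := (hm o R hRpos).1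
  have hMtop : m (ball o R) ≠ ⊤ := (hm o R hRpos).2.ne
  -- any finite subfamily has cardinality at most D
  have hcount : ∀ S : Finset (Set X), ↑S ⊆ 𝒮 → (S.card : ℝ≥0∞) ≤ D := by
    intro S hS
    have hdisjS : (↑S : Set (Set X)).PairwiseDisjoint (fun C => ball (P C) r) := by
      intro C₁ h₁ C₂ h₂ hne
      exact hdisj C₁ (hS h₁) C₂ (hS h₂) hne
    have hsum : ∑ C ∈ S, m (ball (P C) r) ≤ m (ball o R) := by
      rw [← measure_biUnion_finset hdisjS (fun C _ => measurableSet_ball)]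
      apply measure_mono
      intro y hy
      simp only [Set.mem_iUnion] at hy
      obtain ⟨C, hC, hyC⟩ := hy
      exact hannR (hballsub _ (hP1 C (hS hC)) hyC)
    have hlow : (S.card : ℝ≥0∞) * m (ball o R) ≤ D * m (ball o R) := by
      calc (S.card : ℝ≥0∞) * m (ball o R) = ∑ _C ∈ S, m (ball o R) := by
            rw [Finset.sum_const, nsmul_eq_mul]
        _ ≤ ∑ C ∈ S, D * m (ball (P C) r) :=
            Finset.sum_le_sum fun C hC => hMball (P C) (hP1 C (hS hC))
        _ = D * ∑ C ∈ S, m (ball (P C) r) := by rw [Finset.mul_sum]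
        _ ≤ D * m (ball o R) := mul_le_mul_right hsum D
    exact (ENNReal.mul_le_mul_iff_left hM0 hMtop).1 hlow
  -- the family is finite
  have hfin : 𝒮.Finite := by
    by_contra h
    obtain ⟨n, hn⟩ := ENNReal.exists_nat_gt hDne
    obtain ⟨T, hTsub, hTcard⟩ := (Set.Infinite.exists_subset_card_eq h n :
      ∃ T : Finset (Set X), ↑T ⊆ 𝒮 ∧ T.card = n)
    have := hcount T hTsub
    rw [hTcard] at this
    exact absurd this (not_le.2 hn)
  refine ⟨hfin, ?_⟩
  -- cardinality bound
  have hcard : (Nat.card 𝒮 : ℝ≥0∞) ≤ D := by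
    have h1 : Nat.card 𝒮 = hfin.toFinset.card := by
      rw [Nat.card_coe_set_eq, Set.ncard_eq_toFinset_card 𝒮 hfin]
    rw [h1]
    exact hcount hfin.toFinset (by simp)
  -- estimate D by the stated bound
  have hRHS0 : (0 : ℝ) ≤ (2 : ℝ) ^ Q * (8 * κ / (κ - 1)) ^ Q := by
    exact mul_nonneg (Real.rpow_nonneg (by norm_num) Q)
      (Real.rpow_nonneg (div_nonneg (by linarith) (by linarith)) Q)
  have hDle : D ≤ ENNReal.ofReal ((2 : ℝ) ^ Q * (8 * κ / (κ - 1)) ^ Q) := by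
    rw [hDdef, ← ENNReal.ofReal_pow (Real.rpow_nonneg (by norm_num) Q) k]
    apply ENNReal.ofReal_le_ofReal
    have hQk : ((2 : ℝ) ^ Q) ^ k = (2 : ℝ) ^ (Q * (k : ℝ)) := by
      rw [← Real.rpow_natCast ((2 : ℝ) ^ Q) k, ← Real.rpow_mul (by norm_num : (0:ℝ) ≤ 2)]
    have hklog : (k : ℝ) ≤ Real.logb 2 B + 1 :=
      le_of_lt (Nat.ceil_lt_add_one (Real.logb_nonneg one_lt_two hB1))
    have hlog2B : Real.logb 2 B + 1 = Real.logb 2 (2 * B) := by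
      rw [Real.logb_mul (by norm_num) (ne_of_gt hBpos), Real.logb_self_eq_one (by norm_num)]
      ring
    have h2B : 2 * B = 8 * κ / (κ - 1) := by rw [hBdef]; field_simp; ring
    have hexp : Q * (k : ℝ) ≤ Real.logb 2 (2 * B) * Q := by
      rw [mul_comm]
      exact mul_le_mul_of_nonneg_right (hklog.trans hlog2B.le) hQ
    calc ((2 : ℝ) ^ Q) ^ k = (2 : ℝ) ^ (Q * (k : ℝ)) := hQk
      _ ≤ (2 : ℝ) ^ (Real.logb 2 (2 * B) * Q) :=
          Real.rpow_le_rpow_of_exponent_le one_le_two hexp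
      _ = ((2 : ℝ) ^ Real.logb 2 (2 * B)) ^ Q := Real.rpow_mul (by norm_num) _ _
      _ = (2 * B) ^ Q := by rw [Real.rpow_logb two_pos (by norm_num) (by linarith)]
      _ = (8 * κ / (κ - 1)) ^ Q := by rw [h2B]
      _ ≤ (2 : ℝ) ^ Q * (8 * κ / (κ - 1)) ^ Q := by
          apply le_mul_of_one_le_left (Real.rpow_nonneg (by positivity) Q)
          calc (1 : ℝ) = (2 : ℝ) ^ (0 : ℝ) := (Real.rpow_zero 2).symm
            _ ≤ (2 : ℝ) ^ Q := Real.rpow_le_rpow_of_exponent_le one_le_two hQ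
  have hfinal : (Nat.card 𝒮 : ℝ≥0∞) ≤
      ENNReal.ofReal ((2 : ℝ) ^ Q * (8 * κ / (κ - 1)) ^ Q) := le_trans hcard hDle
  rw [← ENNReal.ofReal_natCast] at hfinal
  exact (ENNReal.ofReal_le_ofReal_iff hRHS0).1 hfinal
end
end

section
/- For every Q > 0, κ > 1, α ≥ 0 and β > 0 there exist constants Q₁ > 0 depending only on Q and κ, and Q₂ > 0 depending only on Q, κ, α and β, with the following property: whenever (X,d,m) is a metric measure space such that (X,d) is geodesic and m is globally doubling with doubling dimension Q, whenever o ∈ X satisfies m({o}) = 0, and μ is the measure whose density with respect to m is F(x) := m(B_{d(o,x)}(o))^α · d(o,x)^{−β}, then the doubly measured metric space (X,d,m,μ) admits a good covering with parameters Q₁ and Q₂. -/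
open MeasureTheory Metric Set Filter
open scoped ENNReal NNReal Topology

noncomputable section

/-!
Cut `X ∖ {o}` into the dyadic shells `2ʲ < d(o, x) ≤ 2ʲ⁺¹`, the outermost shell of a bounded
space absorbing everything beyond it, and let `U*ⱼ = U#ⱼ` be a shell together with its two
neighbours. Only consecutive shells touch, so every `U#ⱼ` meets at most seven of them. Since `X`
is geodesic, a nonempty shell contains a ball of a quarter of its outer radius, so by doubling its
`m`-measure is comparable to that of `B(o, 2ʲ)`, uniformly in `j`; and on shells at most two steps
apart the density `m(B(o, d(o, x)))^α d(o, x)^(-β)` varies by a bounded factor, again by doubling.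
Hence shells close to each other have comparable `m`- and `μ`-measures.
-/

lemma measure_union_three_le {X : Type*} [MeasurableSpace X] {ν : Measure X} {U : ℤ → Set X}
    {k : ℤ} {s : ℝ≥0∞} (h : ∀ a, k - 1 ≤ a → a ≤ k + 1 → ν (U a) ≤ s) :
    ν (U (k - 1) ∪ U k ∪ U (k + 1)) ≤ 3 * s :=
  calc ν (U (k - 1) ∪ U k ∪ U (k + 1)) ≤ ν (U (k - 1)) + ν (U k) + ν (U (k + 1)) :=
        (measure_union_le _ _).trans (add_le_add_left (measure_union_le _ _) _)
    _ ≤ s + s + s := by gcongr <;> apply h <;> omega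
    _ = 3 * s := by ring

lemma mem_Icc_of_closure_union_three_inter {X : Type*} [TopologicalSpace X] {U : ℤ → Set X}
    (hadj : ∀ a b, (closure (U a) ∩ closure (U b)).Nonempty → b ≤ a + 1) {i j : ℤ}
    (h : (closure (U (j - 1) ∪ U j ∪ U (j + 1)) ∩
      closure (U (i - 1) ∪ U i ∪ U (i + 1))).Nonempty) :
    j ∈ Icc (i - 3) (i + 3) := by
  have near : ∀ (a : ℤ) {x}, x ∈ closure (U (a - 1) ∪ U a ∪ U (a + 1)) →
      ∃ b, a - 1 ≤ b ∧ b ≤ a + 1 ∧ x ∈ closure (U b) := by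
    intro a x hx
    simp only [closure_union, mem_union] at hx
    rcases hx with (hx | hx) | hx
    exacts [⟨a - 1, by omega, by omega, hx⟩, ⟨a, by omega, by omega, hx⟩,
      ⟨a + 1, by omega, by omega, hx⟩]
  obtain ⟨x, hxj, hxi⟩ := h
  obtain ⟨b, hb₁, hb₂, hxb⟩ := near j hxj
  obtain ⟨b', hb₁', hb₂', hxb'⟩ := near i hxi
  have := hadj b b' ⟨x, hxb, hxb'⟩
  have := hadj b' b ⟨x, hxb', hxb⟩
  constructor <;> omega

lemma union_subset_union_three_min {X : Type*} [TopologicalSpace X] {U : ℤ → Set X}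
    (hadj : ∀ a b, (closure (U a) ∩ closure (U b)).Nonempty → b ≤ a + 1) {i j : ℤ}
    (hij : (closure (U i) ∩ closure (U j)).Nonempty) :
    U i ∪ U j ⊆ U (min i j - 1) ∪ U (min i j) ∪ U (min i j + 1) := by
  have := hadj i j hij
  have := hadj j i (by rwa [inter_comm])
  have h_near : ∀ a, min i j ≤ a → a ≤ min i j + 1 →
      U a ⊆ U (min i j - 1) ∪ U (min i j) ∪ U (min i j + 1) := by
    intro a h₁ h₂
    obtain rfl | rfl : a = min i j ∨ a = min i j + 1 := by omega
    exacts [subset_union_left.trans' subset_union_right, subset_union_right]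
  exact union_subset (h_near i (min_le_left _ _) (by omega))
    (h_near j (min_le_right _ _) (by omega))

lemma measure_union_three_min_le {X : Type*} [TopologicalSpace X] [MeasurableSpace X]
    {ν : Measure X} {U : ℤ → Set X} {c : ℝ≥0∞}
    (hadj : ∀ a b, (closure (U a) ∩ closure (U b)).Nonempty → b ≤ a + 1)
    (hle : ∀ a b, a ≤ b + 1 → b ≤ a + 2 → (U b).Nonempty → ν (U a) ≤ c * ν (U b)) {i j : ℤ}
    (hij : (closure (U i) ∩ closure (U j)).Nonempty) :
    ν (U (min i j - 1) ∪ U (min i j) ∪ U (min i j + 1)) ≤ 3 * c * min (ν (U i)) (ν (U j)) := by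
  have := hadj i j hij
  have := hadj j i (by rwa [inter_comm])
  obtain ⟨b, hb, hmin⟩ : ∃ b, (b = i ∨ b = j) ∧ min (ν (U i)) (ν (U j)) = ν (U b) := by
    rcases le_total (ν (U i)) (ν (U j)) with h | h
    exacts [⟨i, .inl rfl, min_eq_left h⟩, ⟨j, .inr rfl, min_eq_right h⟩]
  have hUb : (U b).Nonempty := by
    rcases hb with rfl | rfl
    exacts [closure_nonempty_iff.1 (hij.mono inter_subset_left),
      closure_nonempty_iff.1 (hij.mono inter_subset_right)]
  rw [hmin, mul_assoc]
  exact measure_union_three_le fun a _ _ => hle a b (by omega) (by omega) hUb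

/-- `U j` together with its two neighbours serves as both `U*` and `U#`. -/
theorem nonempty_goodCovering_of_chain {X : Type*} [MetricSpace X] [MeasurableSpace X]
    {m μ : Measure X} {U : ℤ → Set X} {C : ℝ} (hU : ∀ j, MeasurableSet (U j))
    (hm_cover : m (univ \ ⋃ j, U j) = 0) (hμ_cover : μ (univ \ ⋃ j, U j) = 0)
    (hadj : ∀ a b, (closure (U a) ∩ closure (U b)).Nonempty → b ≤ a + 1)
    (hm_fin : ∀ j, m (U j) < ∞) (hμ_fin : ∀ j, μ (U j) < ∞)
    (hm_le : ∀ a b, a ≤ b + 1 → b ≤ a + 2 → (U b).Nonempty →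
      m (U a) ≤ ENNReal.ofReal C * m (U b))
    (hμ_le : ∀ a b, a ≤ b + 1 → b ≤ a + 2 → (U b).Nonempty →
      μ (U a) ≤ ENNReal.ofReal C * μ (U b)) :
    Nonempty (GoodCovering m μ ℤ 7 (3 * C)) := by
  set V : ℤ → Set X := fun j => U (j - 1) ∪ U j ∪ U (j + 1)
  have hV : ∀ j, MeasurableSet (V j) := fun j => ((hU _).union (hU _)).union (hU _)
  have fin_V : ∀ ν : Measure X, (∀ j, ν (U j) < ∞) → ∀ j, ν (V j) < ∞ := fun ν hfin j =>
    measure_union_lt_top (measure_union_lt_top (hfin _) (hfin _)) (hfin _)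
  have overlap : ∀ i, {j | (closure (V j) ∩ closure (V i)).Nonempty} ⊆ Icc (i - 3) (i + 3) :=
    fun i j => mem_Icc_of_closure_union_three_inter hadj
  have h3C : ENNReal.ofReal (3 * C) = 3 * ENNReal.ofReal C := by
    rw [ENNReal.ofReal_mul zero_le_three, ENNReal.ofReal_ofNat]
  refine ⟨{ U := U, Ustar := V, Usharp := V, countable := inferInstance
            measurable_U := hU, measurable_Ustar := hV, measurable_Usharp := hV
            finite_m := fin_V m hm_fin, finite_mu := fin_V μ hμ_fin
            U_subset_Ustar := fun j => subset_union_left.trans' subset_union_right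
            Ustar_subset_Usharp := fun _ => subset_rfl
            cover_m := hm_cover, cover_mu := hμ_cover
            overlap_finite := fun i => (finite_Icc _ _).subset (overlap i)
            overlap_card := fun i => ?_
            chain := fun i j hij => ⟨min i j, union_subset_union_three_min hadj hij,
              h3C ▸ measure_union_three_min_le hadj hm_le hij,
              h3C ▸ measure_union_three_min_le hadj hμ_le hij⟩ }⟩
  have := Nat.card_mono (finite_Icc _ _) (overlap i)
  simp only [Nat.card_coe_set_eq, ← Finset.coe_Icc, ncard_coe_finset, Int.card_Icc] at this
  exact_mod_cast this.trans (by omega)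

lemma withDensity_apply_le_mul_of_le {X : Type*} [MeasurableSpace X] {m : Measure X}
    {F : X → ℝ≥0∞} {A B : Set X} (hA : MeasurableSet A) (hB : MeasurableSet B) {c c' : ℝ≥0∞}
    (hc₀ : c ≠ 0) (hc : c ≠ ∞) (hF : ∀ x ∈ A, ∀ y ∈ B, F x ≤ c * F y) (hm : m A ≤ c' * m B) :
    m.withDensity F A ≤ c * c' * m.withDensity F B := by
  set s := ⨅ y ∈ B, F y
  have hAs : ∀ x ∈ A, F x ≤ c * s := fun x hx => by
    simp_rw [s, ENNReal.mul_iInf_of_ne hc₀ hc]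
    exact le_iInf₂ (hF x hx)
  calc m.withDensity F A = ∫⁻ x in A, F x ∂m := withDensity_apply _ hA
    _ ≤ ∫⁻ _ in A, c * s ∂m := setLIntegral_mono' hA hAs
    _ = c * s * m A := setLIntegral_const _ _
    _ ≤ c * s * (c' * m B) := by gcongr
    _ = c * c' * ∫⁻ _ in B, s ∂m := by rw [setLIntegral_const]; ring
    _ ≤ c * c' * ∫⁻ y in B, F y ∂m :=
      mul_le_mul_right (setLIntegral_mono' hB fun _ hy => biInf_le F hy) _
    _ = c * c' * m.withDensity F B := by rw [withDensity_apply _ hB]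

section Geometry

variable {X : Type*} [MetricSpace X]

lemma IsGeodesicSpace.exists_dist_eq (hX : IsGeodesicSpace X) (o w : X) {u : ℝ} (hu₀ : 0 ≤ u)
    (hu : u ≤ dist o w) : ∃ z, dist o z = u := by
  obtain ⟨γ, hγ₀, hγ₁, hγ⟩ := hX o w
  have hcont : ContinuousOn (fun t => dist o (γ t)) (Icc 0 (dist o w)) :=
    (continuous_const.dist continuous_id).comp_continuousOn hγ.continuousOn
  obtain ⟨t, -, ht⟩ :=
    intermediate_value_Icc (hu₀.trans hu) hcont (by simpa [hγ₀, hγ₁] using ⟨hu₀, hu⟩)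
  exact ⟨γ t, ht⟩

variable [MeasurableSpace X] {m : Measure X} {Q : ℝ}

lemma DoublingOfDim.measure_ball_two_pow_mul_le (hdbl : DoublingOfDim m Q) (x : X) (n : ℕ)
    {r : ℝ} (hr : 0 < r) : m (ball x (2 ^ n * r)) ≤ 2 ^ (Q * n) * m (ball x r) := by
  induction n with
  | zero => simp
  | succ n ih =>
    have h2Q : ENNReal.ofReal (2 ^ Q) = 2 ^ Q := by
      rw [← ENNReal.ofReal_rpow_of_pos two_pos, ENNReal.ofReal_ofNat]
    calc m (ball x (2 ^ (n + 1) * r)) = m (ball x (2 * (2 ^ n * r))) := by rw [pow_succ']; ring_nf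
      _ ≤ 2 ^ Q * m (ball x (2 ^ n * r)) := h2Q ▸ hdbl x _ (by positivity)
      _ ≤ 2 ^ Q * (2 ^ (Q * n) * m (ball x r)) := by gcongr
      _ = 2 ^ (Q * ↑(n + 1)) * m (ball x r) := by
        rw [← mul_assoc, ← ENNReal.rpow_add _ _ two_ne_zero ENNReal.ofNat_ne_top]
        push_cast; ring_nf

/-- The annulus contains the ball `B(z, r/2)` for a point `z` with `d(o, z) = 3r/2`. -/
lemma measure_ball_le_measure_annulus (hX : IsGeodesicSpace X) (hdbl : DoublingOfDim m Q)
    {o w : X} {r : ℝ} (hr : 0 < r) (hw : 2 * r ≤ dist o w) {n : ℕ} (hn : 1 ≤ n) :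
    m (ball o (2 ^ n * r)) ≤ 2 ^ (Q * (n + 2)) * m {x | r < dist o x ∧ dist o x < 2 * r} := by
  obtain ⟨z, hz⟩ := hX.exists_dist_eq o w (u := 3 / 2 * r) (by positivity) (by linarith)
  have h2n : (2 : ℝ) ≤ 2 ^ n := le_self_pow₀ one_le_two (by omega)
  have h_big : ball o (2 ^ n * r) ⊆ ball z (2 ^ (n + 2) * (r / 2)) := by
    intro y hy
    rw [mem_ball] at hy ⊢
    have := dist_triangle z o y
    rw [dist_comm z o, hz, dist_comm o y, dist_comm z y] at this
    rw [pow_add]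
    nlinarith
  have h_small : ball z (r / 2) ⊆ {x | r < dist o x ∧ dist o x < 2 * r} := by
    intro y hy
    rw [mem_ball] at hy
    have := dist_triangle o z y
    have := dist_triangle o y z
    rw [dist_comm z y] at *
    constructor <;> linarith
  calc m (ball o (2 ^ n * r)) ≤ m (ball z (2 ^ (n + 2) * (r / 2))) := measure_mono h_big
    _ ≤ 2 ^ (Q * ↑(n + 2)) * m (ball z (r / 2)) :=
      hdbl.measure_ball_two_pow_mul_le z _ (by positivity)
    _ ≤ 2 ^ (Q * (n + 2)) * m {x | r < dist o x ∧ dist o x < 2 * r} := by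
      push_cast; exact mul_le_mul_right (measure_mono h_small) _

end Geometry

lemma two_zpow_add_natCast (j : ℤ) (n : ℕ) : (2 : ℝ) ^ (j + n) = 2 ^ n * 2 ^ j := by
  rw [zpow_add₀ two_ne_zero, zpow_natCast, mul_comm]

section Shells

variable {X : Type*} [MetricSpace X]

/-- Swallowing the rest of a bounded space into the outermost shell keeps the whole open annulus
`2ʲ < d(o, ·) < 2ʲ⁺¹` inside every nonempty shell. -/
def dyadicShell (o : X) (j : ℤ) : Set X :=
  {x | (∃ w, (2 : ℝ) ^ (j + 1) ≤ dist o w) ∧ (2 : ℝ) ^ j < dist o x ∧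
    ((∃ w, (2 : ℝ) ^ (j + 2) ≤ dist o w) → dist o x ≤ 2 ^ (j + 1))}

variable {o : X} {j : ℤ}

lemma dyadicShell_subset : dyadicShell o j ⊆ {x | 2 ^ j < dist o x ∧ dist o x ≤ 2 ^ (j + 2)} := by
  rintro x ⟨-, hx, hx_top⟩
  refine ⟨hx, ?_⟩
  by_cases h : ∃ w, (2 : ℝ) ^ (j + 2) ≤ dist o w
  · exact (hx_top h).trans (zpow_le_zpow_right₀ one_le_two (by omega))
  · push Not at h
    exact (h x).le

lemma annulus_subset_dyadicShell {w : X} (hw : 2 ^ (j + 1) ≤ dist o w) :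
    {x | 2 ^ j < dist o x ∧ dist o x < 2 ^ (j + 1)} ⊆ dyadicShell o j :=
  fun _ hx => ⟨⟨w, hw⟩, hx.1, fun _ => hx.2.le⟩

lemma measurableSet_dyadicShell [MeasurableSpace X] [OpensMeasurableSpace X] (o : X) (j : ℤ) :
    MeasurableSet (dyadicShell o j) := by
  have hd : Measurable (dist o) := (continuous_const.dist continuous_id).measurable
  by_cases h₁ : ∃ w, (2 : ℝ) ^ (j + 1) ≤ dist o w <;>
    by_cases h₂ : ∃ w, (2 : ℝ) ^ (j + 2) ≤ dist o w <;>
    simp only [dyadicShell, h₁, h₂, true_and, false_and, true_imp_iff, false_imp_iff, and_true,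
      ofPred_false, MeasurableSet.empty]
  · exact measurableSet_lt measurable_const hd |>.inter (measurableSet_le hd measurable_const)
  · exact measurableSet_lt measurable_const hd

lemma iUnion_dyadicShell (o : X) : ⋃ j, dyadicShell o j = {o}ᶜ := by
  ext x
  simp only [mem_iUnion, mem_compl_iff, mem_singleton_iff]
  refine ⟨fun ⟨j, hx⟩ => ?_, fun hx => ?_⟩
  · rintro rfl
    exact (zpow_pos two_pos j).not_ge (by simpa using hx.2.1.le)
  obtain ⟨j, hj, hj'⟩ := exists_mem_Ioc_zpow (dist_pos.2 (Ne.symm hx)) one_lt_two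
  by_cases h : ∃ w, (2 : ℝ) ^ (j + 1) ≤ dist o w
  · exact ⟨j, h, hj, fun _ => hj'⟩
  · refine ⟨j - 1, ⟨x, by simpa using hj.le⟩, ?_, fun h' => absurd ?_ h⟩
    · exact (zpow_lt_zpow_right₀ one_lt_two (by omega)).trans hj
    · rwa [show j - 1 + 2 = j + 1 by ring] at h'

lemma le_add_one_of_closure_dyadicShell_inter {a b : ℤ}
    (h : (closure (dyadicShell o a) ∩ closure (dyadicShell o b)).Nonempty) : b ≤ a + 1 := by
  obtain ⟨x, hxa, hxb⟩ := h
  by_contra! hab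
  have hd : Continuous (dist o) := continuous_const.dist continuous_id
  obtain ⟨-, ⟨w, hw⟩, -, -⟩ := closure_nonempty_iff.1 ⟨x, hxb⟩
  have h_reach : ∃ w, (2 : ℝ) ^ (a + 2) ≤ dist o w :=
    ⟨w, (zpow_le_zpow_right₀ one_le_two (by omega)).trans hw⟩
  have h_upper : dist o x ≤ 2 ^ (a + 1) :=
    closure_minimal (fun y hy => hy.2.2 h_reach) (isClosed_le hd continuous_const) hxa
  have h_lower : 2 ^ b ≤ dist o x :=
    closure_minimal (fun y hy => hy.2.1.le) (isClosed_le continuous_const hd) hxb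
  have := zpow_lt_zpow_right₀ (one_lt_two (α := ℝ)) (show a + 1 < b by omega)
  linarith

lemma dyadicShell_subset_ball (j : ℤ) : dyadicShell o j ⊆ ball o (2 ^ 3 * 2 ^ j) := by
  intro x hx
  rw [mem_ball, dist_comm, ← two_zpow_add_natCast]
  exact (dyadicShell_subset hx).2.trans_lt (zpow_lt_zpow_right₀ one_lt_two (by omega))

end Shells

section Weight

variable {X : Type*} [MetricSpace X] [MeasurableSpace X] {m : Measure X} {Q α β : ℝ} {o : X}

def radialWeight (m : Measure X) (o : X) (α β : ℝ) (x : X) : ℝ≥0∞ :=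
  m (ball o (dist o x)) ^ α * ENNReal.ofReal (dist o x) ^ (-β)

lemma radialWeight_lt_top (hreg : BallRegular m) (hα : 0 ≤ α) {x : X} (hx : 0 < dist o x) :
    radialWeight m o α β x < ∞ := by
  refine ENNReal.mul_lt_top (ENNReal.rpow_lt_top_of_nonneg hα (hreg o _ hx).2.ne) ?_
  rw [ENNReal.rpow_neg]
  exact ENNReal.inv_lt_top.2 (ENNReal.rpow_pos (ENNReal.ofReal_pos.2 hx) ENNReal.ofReal_ne_top)

lemma radialWeight_le (hdbl : DoublingOfDim m Q) (hα : 0 ≤ α) (hβ : 0 ≤ β) {x y : X} {n k : ℕ}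
    (hy : 0 < dist o y) (hxy : dist o x ≤ 2 ^ n * dist o y) (hyx : dist o y ≤ 2 ^ k * dist o x) :
    radialWeight m o α β x ≤ 2 ^ (Q * n * α + k * β) * radialWeight m o α β y := by
  have hx : 0 < dist o x := pos_of_mul_pos_right (hy.trans_le hyx) (by positivity)
  have h_ball : m (ball o (dist o x)) ^ α ≤ 2 ^ (Q * n * α) * m (ball o (dist o y)) ^ α :=
    calc m (ball o (dist o x)) ^ α ≤ (2 ^ (Q * n) * m (ball o (dist o y))) ^ α :=
          ENNReal.rpow_le_rpow ((measure_mono (ball_subset_ball hxy)).trans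
            (hdbl.measure_ball_two_pow_mul_le o n hy)) hα
      _ = 2 ^ (Q * n * α) * m (ball o (dist o y)) ^ α := by
        rw [ENNReal.mul_rpow_of_nonneg _ _ hα, ← ENNReal.rpow_mul]
  have h_inv : (dist o x)⁻¹ ≤ 2 ^ k * (dist o y)⁻¹ := by
    rw [← div_eq_mul_inv, le_div_iff₀ hy, ← div_eq_inv_mul, div_le_iff₀ hx]
    exact hyx
  have h_dist : ENNReal.ofReal (dist o x) ^ (-β) ≤
      2 ^ (k * β) * ENNReal.ofReal (dist o y) ^ (-β) := by
    rw [ENNReal.rpow_neg, ENNReal.rpow_neg, ← ENNReal.inv_rpow, ← ENNReal.inv_rpow,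
      ← ENNReal.ofReal_inv_of_pos hx, ← ENNReal.ofReal_inv_of_pos hy, ENNReal.rpow_mul,
      ← ENNReal.mul_rpow_of_nonneg _ _ hβ]
    gcongr
    rw [ENNReal.rpow_natCast, ← ENNReal.ofReal_ofNat, ← ENNReal.ofReal_pow zero_le_two,
      ← ENNReal.ofReal_mul (by positivity)]
    exact ENNReal.ofReal_le_ofReal h_inv
  calc radialWeight m o α β x
      ≤ 2 ^ (Q * n * α) * m (ball o (dist o y)) ^ α *
        (2 ^ (k * β) * ENNReal.ofReal (dist o y) ^ (-β)) := mul_le_mul' h_ball h_dist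
    _ = 2 ^ (Q * n * α + k * β) * radialWeight m o α β y := by
      rw [ENNReal.rpow_add _ _ two_ne_zero ENNReal.ofNat_ne_top, radialWeight]; ring

end Weight

section ShellMeasures

variable {X : Type*} [MetricSpace X] [MeasurableSpace X] {m : Measure X} {Q α β : ℝ} {o : X}

lemma measure_dyadicShell_le (hX : IsGeodesicSpace X) (hdbl : DoublingOfDim m Q) {a b : ℤ}
    (hab : a ≤ b + 1) (hb : (dyadicShell o b).Nonempty) :
    m (dyadicShell o a) ≤ 2 ^ (6 * Q) * m (dyadicShell o b) := by
  obtain ⟨-, ⟨w, hw⟩, -, -⟩ := hb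
  have h_two : (2 : ℝ) ^ (b + 1) = 2 * 2 ^ b := by
    rw [zpow_add_one₀ two_ne_zero, mul_comm]
  calc m (dyadicShell o a) ≤ m (ball o (2 ^ 4 * 2 ^ b)) := by
        refine measure_mono ((dyadicShell_subset_ball a).trans (ball_subset_ball ?_))
        rw [← two_zpow_add_natCast, ← two_zpow_add_natCast]
        exact zpow_le_zpow_right₀ one_le_two (by omega)
    _ ≤ 2 ^ (Q * ((4 : ℕ) + 2)) * m {x | 2 ^ b < dist o x ∧ dist o x < 2 * 2 ^ b} :=
        measure_ball_le_measure_annulus hX hdbl (zpow_pos two_pos b) (h_two ▸ hw) (by norm_num)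
    _ ≤ 2 ^ (6 * Q) * m (dyadicShell o b) := by
        rw [← h_two]
        norm_num [mul_comm Q]
        exact mul_le_mul_right (measure_mono (annulus_subset_dyadicShell hw)) _

lemma radialWeight_dyadicShell_le (hdbl : DoublingOfDim m Q) (hα : 0 ≤ α) (hβ : 0 ≤ β)
    {a b : ℤ} (hab : a ≤ b + 1) (hba : b ≤ a + 2) {x y : X} (hx : x ∈ dyadicShell o a)
    (hy : y ∈ dyadicShell o b) :
    radialWeight m o α β x ≤ 2 ^ (3 * Q * α + 4 * β) * radialWeight m o α β y := by
  obtain ⟨hx₁, hx₂⟩ := dyadicShell_subset hx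
  obtain ⟨hy₁, hy₂⟩ := dyadicShell_subset hy
  have hxy : dist o x ≤ 2 ^ 3 * dist o y := by
    refine hx₂.trans ((zpow_le_zpow_right₀ one_le_two (show a + 2 ≤ b + (3 : ℕ) by omega)).trans ?_)
    rw [two_zpow_add_natCast]
    gcongr
  have hyx : dist o y ≤ 2 ^ 4 * dist o x := by
    refine hy₂.trans ((zpow_le_zpow_right₀ one_le_two (show b + 2 ≤ a + (4 : ℕ) by omega)).trans ?_)
    rw [two_zpow_add_natCast]
    gcongr
  have := radialWeight_le hdbl hα hβ ((zpow_pos two_pos b).trans hy₁) hxy hyx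
  norm_num at this
  convert this using 3
  ring

lemma withDensity_dyadicShell_le [OpensMeasurableSpace X] (hX : IsGeodesicSpace X)
    (hdbl : DoublingOfDim m Q) (hα : 0 ≤ α) (hβ : 0 ≤ β) {a b : ℤ} (hab : a ≤ b + 1)
    (hba : b ≤ a + 2) (hb : (dyadicShell o b).Nonempty) :
    m.withDensity (radialWeight m o α β) (dyadicShell o a) ≤
      2 ^ (3 * Q * α + 4 * β) * 2 ^ (6 * Q) *
        m.withDensity (radialWeight m o α β) (dyadicShell o b) :=
  withDensity_apply_le_mul_of_le (measurableSet_dyadicShell o a) (measurableSet_dyadicShell o b)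
    (by positivity) (ENNReal.rpow_ne_top_of_ne_zero two_ne_zero ENNReal.ofNat_ne_top)
    (fun _ hx _ hy => radialWeight_dyadicShell_le hdbl hα hβ hab hba hx hy)
    (measure_dyadicShell_le hX hdbl hab hb)

lemma measure_dyadicShell_lt_top (hreg : BallRegular m) (j : ℤ) : m (dyadicShell o j) < ∞ :=
  (measure_mono (dyadicShell_subset_ball j)).trans_lt (hreg o _ (by positivity)).2

lemma withDensity_dyadicShell_lt_top [OpensMeasurableSpace X] (hreg : BallRegular m)
    (hdbl : DoublingOfDim m Q) (hα : 0 ≤ α) (hβ : 0 ≤ β) (j : ℤ) :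
    m.withDensity (radialWeight m o α β) (dyadicShell o j) < ∞ := by
  rcases (dyadicShell o j).eq_empty_or_nonempty with h | ⟨y, hy⟩
  · simp [h]
  have hS := measurableSet_dyadicShell o j
  calc m.withDensity (radialWeight m o α β) (dyadicShell o j)
      = ∫⁻ x in dyadicShell o j, radialWeight m o α β x ∂m := withDensity_apply _ hS
    _ ≤ ∫⁻ _ in dyadicShell o j, 2 ^ (3 * Q * α + 4 * β) * radialWeight m o α β y ∂m :=
      setLIntegral_mono' hS fun x hx =>
        radialWeight_dyadicShell_le hdbl hα hβ (by omega) (by omega) hx hy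
    _ = 2 ^ (3 * Q * α + 4 * β) * radialWeight m o α β y * m (dyadicShell o j) :=
      setLIntegral_const _ _
    _ < ∞ := ENNReal.mul_lt_top (ENNReal.mul_lt_top
      (ENNReal.rpow_ne_top_of_ne_zero two_ne_zero ENNReal.ofNat_ne_top).lt_top
      (radialWeight_lt_top hreg hα ((zpow_pos two_pos j).trans (dyadicShell_subset hy).1)))
      (measure_dyadicShell_lt_top hreg j)

end ShellMeasures

theorem good_covering_exists_general
    (Q : ℝ) (hQ : 0 < Q) :
    ∃ Q₁ : ℝ, 0 < Q₁ ∧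
      ∀ α β : ℝ, 0 ≤ α → 0 < β →
        ∃ Q₂ : ℝ, 0 < Q₂ ∧
          ∀ (X : Type) [MetricSpace X] [MeasurableSpace X] [BorelSpace X]
            [TopologicalSpace.SeparableSpace X] (m : Measure X),
            BallRegular m → IsGeodesicSpace X → DoublingOfDim m Q →
            ∀ o : X, m {o} = 0 →
              ∃ I : Type, Nonempty (GoodCovering m
                (m.withDensity fun x =>
                  m (ball o (dist o x)) ^ α * ENNReal.ofReal (dist o x) ^ (-β)) I Q₁ Q₂) := by
  refine ⟨7, by norm_num, fun α β hα hβ => ⟨3 * 2 ^ (3 * Q * α + 4 * β + 6 * Q), by positivity, ?_⟩⟩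
  intro X _ _ _ _ m hreg hX hdbl o ho
  have hC : ENNReal.ofReal (2 ^ (3 * Q * α + 4 * β + 6 * Q)) =
      2 ^ (3 * Q * α + 4 * β) * 2 ^ (6 * Q) := by
    rw [← ENNReal.ofReal_rpow_of_pos two_pos, ENNReal.ofReal_ofNat,
      ENNReal.rpow_add _ _ two_ne_zero ENNReal.ofNat_ne_top]
  have h_one : 1 ≤ (2 : ℝ≥0∞) ^ (3 * Q * α + 4 * β) :=
    ENNReal.one_le_rpow one_le_two (by positivity)
  have h_cover : univ \ ⋃ j, dyadicShell o j = {o} := by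
    rw [iUnion_dyadicShell, sdiff_compl, univ_inter]
  refine ⟨ℤ, nonempty_goodCovering_of_chain (measurableSet_dyadicShell o) (h_cover ▸ ho)
    (h_cover ▸ withDensity_absolutelyContinuous _ _ ho)
    (fun _ _ => le_add_one_of_closure_dyadicShell_inter) (measure_dyadicShell_lt_top hreg)
    (withDensity_dyadicShell_lt_top hreg hdbl hα hβ.le) (fun a b hab _ hb => ?_)
    (fun a b hab hba hb => hC ▸ withDensity_dyadicShell_le hX hdbl hα hβ.le hab hba hb)⟩
  rw [hC]
  exact (measure_dyadicShell_le hX hdbl hab hb).trans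
    (mul_le_mul_left (le_mul_of_one_le_left' h_one) _)

/-- Existence of good coverings on geodesic doubling spaces, for the weighted
measure with density `m(B_{d(o,x)}(o))^α d(o,x)^{-β}`. -/
theorem good_covering_exists
    (Q κ : ℝ) (hQ : 0 < Q) (hκ : 1 < κ) :
    ∃ Q₁ : ℝ, 0 < Q₁ ∧
      ∀ α β : ℝ, 0 ≤ α → 0 < β →
        ∃ Q₂ : ℝ, 0 < Q₂ ∧
          ∀ (X : Type) [MetricSpace X] [MeasurableSpace X] [BorelSpace X]
            [TopologicalSpace.SeparableSpace X] (m : Measure X),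
            BallRegular m → IsGeodesicSpace X → DoublingOfDim m Q →
            ∀ o : X, m {o} = 0 →
              ∃ I : Type, Nonempty (GoodCovering m
                (m.withDensity fun x =>
                  m (ball o (dist o x)) ^ α * ENNReal.ofReal (dist o x) ^ (-β)) I Q₁ Q₂) :=
  good_covering_exists_general Q hQ
end
end

section
/- Let (X,d,m) be a metric measure space with m globally doubling of doubling dimension Q, let o ∈ X, κ > 1, i ∈ ℤ, and let 0 < s ≤ t < ∞. Let μ_{s,t} be the measure whose density with respect to m is x ↦ m(B_{d(o,x)}(o))^{t/s−1} · d(o,x)^{−t}. Suppose U ⊆ X is a Borel set with U ⊆ A(o,κ^{i−1},κ^{i+1}) := B_{κ^{i+1}}(o) ∖ cl(B_{κ^{i−1}}(o)) and B_{ρ_i}(x) ⊆ U for some point x with d(o,x) = (κ^i + κ^{i−1})/2, where ρ_i := (κ^i − κ^{i−1})/4. Then C_e⁻¹ · m(B_{κ^{i−1}}(o))^{t/s} · κ^{−(i+1)t} ≤ μ_{s,t}(U) ≤ m(B_{κ^{i+1}}(o))^{t/s} · κ^{−(i−1)t}, where C_e := (16κ/(κ−1))^Q. -/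
open MeasureTheory Metric Set Filter
open scoped ENNReal NNReal Topology

noncomputable section

/-! The ball `B_{κ^{i-1}}(o)` lies in `B_R(x)` with `R = κ^{i-1} + d(o,x)`, and
`2R/ρ_i = 4(κ+3)/(κ-1) ≤ 16κ/(κ-1)`; iterating the doubling inequality until the radius
exceeds `R` therefore gives `m(B_{κ^{i-1}}(o)) ≤ C_e m(B_{ρ_i}(x))`. On the annulus the density
of `μ_{s,t}` lies between its values at the two boundary radii, since `t/s - 1 ≥ 0` makes
`m(B_r(o))^{t/s-1}` increasing and `-t ≤ 0` makes `r^{-t}` decreasing in `r`. Integrating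
these constants over `B_{ρ_i}(x) ⊆ U` and over the annulus gives the two bounds. -/

namespace DoublingOfDim

variable {X : Type*} [MetricSpace X] [MeasurableSpace X] {m : Measure X} {Q : ℝ}

lemma measure_ball_two_pow_mul_le_s17 (hdb : DoublingOfDim m Q) (x : X) {r : ℝ} (hr : 0 < r)
    (n : ℕ) : m (ball x (2 ^ n * r)) ≤ ENNReal.ofReal (2 ^ Q) ^ n * m (ball x r) := by
  induction n with
  | zero => simp
  | succ n ih =>
    calc m (ball x (2 ^ (n + 1) * r)) = m (ball x (2 * (2 ^ n * r))) := by ring_nf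
      _ ≤ ENNReal.ofReal (2 ^ Q) * m (ball x (2 ^ n * r)) := hdb x _ (by positivity)
      _ ≤ ENNReal.ofReal (2 ^ Q) * (ENNReal.ofReal (2 ^ Q) ^ n * m (ball x r)) := by gcongr
      _ = ENNReal.ofReal (2 ^ Q) ^ (n + 1) * m (ball x r) := by ring

lemma nonneg (hdb : DoublingOfDim m Q) {x : X} {r : ℝ} (hr : 0 < r)
    (h0 : m (ball x r) ≠ 0) (htop : m (ball x r) ≠ ∞) : 0 ≤ Q := by
  have hle : 1 * m (ball x r) ≤ ENNReal.ofReal (2 ^ Q) * m (ball x r) := by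
    rw [one_mul]; exact (measure_mono (ball_subset_ball (by linarith))).trans (hdb x r hr)
  have h2Q : (1 : ℝ) ≤ 2 ^ Q :=
    ENNReal.one_le_ofReal.mp ((ENNReal.mul_le_mul_iff_left h0 htop).mp hle)
  rwa [← Real.rpow_zero 2, Real.rpow_le_rpow_left_iff one_lt_two] at h2Q

lemma measure_ball_le_rpow_mul (hdb : DoublingOfDim m Q) (hQ : 0 ≤ Q) (x : X) {r R : ℝ}
    (hr : 0 < r) (hrR : r ≤ R) :
    m (ball x R) ≤ ENNReal.ofReal ((2 * R / r) ^ Q) * m (ball x r) := by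
  obtain ⟨n, hn, hlt⟩ := exists_nat_pow_near ((one_le_div hr).mpr hrR) one_lt_two
  have hR : R ≤ 2 ^ (n + 1) * r := ((div_lt_iff₀ hr).mp hlt).le
  have h2n : (2 : ℝ) ^ (n + 1) ≤ 2 * R / r := by
    rw [pow_succ, mul_comm, mul_div_assoc]; exact mul_le_mul_of_nonneg_left hn zero_le_two
  calc m (ball x R) ≤ m (ball x (2 ^ (n + 1) * r)) := measure_mono (ball_subset_ball hR)
    _ ≤ ENNReal.ofReal (2 ^ Q) ^ (n + 1) * m (ball x r) :=
      hdb.measure_ball_two_pow_mul_le_s17 x hr (n + 1)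
    _ = ENNReal.ofReal (((2 : ℝ) ^ (n + 1)) ^ Q) * m (ball x r) := by
      rw [← ENNReal.ofReal_pow (by positivity), Real.rpow_pow_comm zero_le_two]
    _ ≤ ENNReal.ofReal ((2 * R / r) ^ Q) * m (ball x r) := by gcongr

lemma measure_ball_le_mul_measure_ball_of_dist_eq (hdb : DoublingOfDim m Q) (hQ : 0 ≤ Q)
    {κ a : ℝ} (hκ : 1 < κ) (ha : 0 < a) {o x : X} (hx : dist o x = (κ * a + a) / 2) :
    m (ball o a) ≤ ENNReal.ofReal ((16 * κ / (κ - 1)) ^ Q) * m (ball x ((κ * a - a) / 4)) := by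
  have hρ : 0 < (κ * a - a) / 4 := by nlinarith
  have hρR : (κ * a - a) / 4 ≤ a + dist o x := by rw [hx]; nlinarith
  have hratio : 2 * (a + dist o x) / ((κ * a - a) / 4) ≤ 16 * κ / (κ - 1) := by
    rw [div_le_div_iff₀ hρ (by linarith), hx]
    nlinarith [mul_nonneg ha.le (sq_nonneg (κ - 1))]
  calc m (ball o a) ≤ m (ball x (a + dist o x)) := measure_mono (ball_subset_ball' le_rfl)
    _ ≤ ENNReal.ofReal ((2 * (a + dist o x) / ((κ * a - a) / 4)) ^ Q) *
        m (ball x ((κ * a - a) / 4)) := hdb.measure_ball_le_rpow_mul hQ x hρ hρR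
    _ ≤ ENNReal.ofReal ((16 * κ / (κ - 1)) ^ Q) * m (ball x ((κ * a - a) / 4)) := by gcongr

end DoublingOfDim

lemma ENNReal.rpow_sub_one_mul_self (x : ℝ≥0∞) {p : ℝ} (hp : 1 ≤ p) :
    x ^ (p - 1) * x = x ^ p := by
  conv_rhs => rw [← sub_add_cancel p 1,
    ENNReal.rpow_add_of_nonneg _ _ (sub_nonneg.mpr hp) zero_le_one, ENNReal.rpow_one]

lemma ENNReal.ofReal_zpow_rpow_neg {κ : ℝ} (hκ : 0 < κ) (j : ℤ) (t : ℝ) :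
    ENNReal.ofReal (κ ^ j) ^ (-t) = ENNReal.ofReal (κ ^ (-(j : ℝ) * t)) := by
  rw [ENNReal.ofReal_rpow_of_pos (_root_.zpow_pos hκ j), ← Real.rpow_intCast,
    ← Real.rpow_mul hκ.le, neg_mul, mul_neg]

section withDensity

variable {X : Type*} [MeasurableSpace X] {μ : Measure X} {f : X → ℝ≥0∞} {A : Set X} {c : ℝ≥0∞}

lemma mul_le_withDensity_apply_of_forall_le (hA : MeasurableSet A) (hc : ∀ y ∈ A, c ≤ f y) :
    c * μ A ≤ μ.withDensity f A :=
  calc c * μ A = ∫⁻ _ in A, c ∂μ := (setLIntegral_const A c).symm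
    _ ≤ ∫⁻ y in A, f y ∂μ := setLIntegral_mono' hA hc
    _ ≤ μ.withDensity f A := withDensity_apply_le f A

lemma withDensity_apply_le_mul_of_forall_le (hA : MeasurableSet A) (hc : ∀ y ∈ A, f y ≤ c) :
    μ.withDensity f A ≤ c * μ A :=
  calc μ.withDensity f A = ∫⁻ y in A, f y ∂μ := withDensity_apply f hA
    _ ≤ ∫⁻ _ in A, c ∂μ := setLIntegral_mono' hA hc
    _ = c * μ A := setLIntegral_const A c

end withDensity

lemma dist_mem_Icc_of_mem_ball_sdiff_ball {X : Type*} [PseudoMetricSpace X] {o y : X} {a b : ℝ}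
    (hy : y ∈ ball o b \ ball o a) : dist o y ∈ Icc a b :=
  ⟨not_lt.mp (mt mem_ball'.mpr hy.2), (mem_ball'.mp hy.1).le⟩

section weightMeasure

variable {X : Type*} [MetricSpace X] [MeasurableSpace X] (m : Measure X) (o : X) {s t a b : ℝ}

def weightDensity (s t : ℝ) (y : X) : ℝ≥0∞ :=
  m (ball o (dist o y)) ^ (t / s - 1) * ENNReal.ofReal (dist o y) ^ (-t)

lemma weightMeasure_eq_withDensity :
    weightMeasure m o s t = m.withDensity (weightDensity m o s t) := rfl

variable {m o}

lemma le_weightDensity (hts : 1 ≤ t / s) (ht : 0 ≤ t) {y : X} (hy : dist o y ∈ Icc a b) :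
    m (ball o a) ^ (t / s - 1) * ENNReal.ofReal b ^ (-t) ≤ weightDensity m o s t y := by
  obtain ⟨ha, hb⟩ := hy
  unfold weightDensity
  rw [ENNReal.rpow_neg, ENNReal.rpow_neg]
  gcongr

lemma weightDensity_le (hts : 1 ≤ t / s) (ht : 0 ≤ t) {y : X} (hy : dist o y ∈ Icc a b) :
    weightDensity m o s t y ≤ m (ball o b) ^ (t / s - 1) * ENNReal.ofReal a ^ (-t) := by
  obtain ⟨ha, hb⟩ := hy
  unfold weightDensity
  rw [ENNReal.rpow_neg, ENNReal.rpow_neg]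
  gcongr

variable [OpensMeasurableSpace X] {U : Set X}

lemma le_weightMeasure_of_ball_subset (hts : 1 ≤ t / s) (ht : 0 ≤ t) {x : X} {r : ℝ}
    (hball : ball x r ⊆ U) (hU : U ⊆ ball o b \ ball o a) :
    m (ball o a) ^ (t / s - 1) * ENNReal.ofReal b ^ (-t) * m (ball x r) ≤
      weightMeasure m o s t U := by
  rw [weightMeasure_eq_withDensity]
  calc _ ≤ m.withDensity (weightDensity m o s t) (ball x r) :=
        mul_le_withDensity_apply_of_forall_le measurableSet_ball fun _ hy =>
          le_weightDensity hts ht (dist_mem_Icc_of_mem_ball_sdiff_ball (hU (hball hy)))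
    _ ≤ m.withDensity (weightDensity m o s t) U := measure_mono hball

lemma weightMeasure_le_of_subset_ball_sdiff_ball (hts : 1 ≤ t / s) (ht : 0 ≤ t)
    (hU : U ⊆ ball o b \ ball o a) :
    weightMeasure m o s t U ≤ m (ball o b) ^ (t / s) * ENNReal.ofReal a ^ (-t) := by
  rw [weightMeasure_eq_withDensity]
  calc _ ≤ m.withDensity (weightDensity m o s t) (ball o b \ ball o a) := measure_mono hU
    _ ≤ m (ball o b) ^ (t / s - 1) * ENNReal.ofReal a ^ (-t) * m (ball o b \ ball o a) :=
      withDensity_apply_le_mul_of_forall_le (measurableSet_ball.diff measurableSet_ball)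
        fun _ hy => weightDensity_le hts ht (dist_mem_Icc_of_mem_ball_sdiff_ball hy)
    _ ≤ m (ball o b) ^ (t / s - 1) * ENNReal.ofReal a ^ (-t) * m (ball o b) := by
      gcongr; exact sdiff_subset
    _ = m (ball o b) ^ (t / s) * ENNReal.ofReal a ^ (-t) := by
      rw [← ENNReal.rpow_sub_one_mul_self _ hts]; ring

end weightMeasure

theorem weighted_measure_annulus_piece_bounds_general
    {X : Type*} [MetricSpace X] [MeasurableSpace X] [BorelSpace X]
    (m : Measure X) (hm : BallRegular m)
    (Q : ℝ) (hdb : DoublingOfDim m Q)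
    (o : X) (κ : ℝ) (hκ : 1 < κ) (i : ℤ)
    (s t : ℝ) (hs : 0 < s) (hst : s ≤ t)
    (U : Set X)
    (hUsub : U ⊆ ball o (κ ^ (i + 1)) \ closure (ball o (κ ^ (i - 1))))
    (x : X) (hx : dist o x = (κ ^ i + κ ^ (i - 1)) / 2)
    (hball : ball x ((κ ^ i - κ ^ (i - 1)) / 4) ⊆ U) :
    ENNReal.ofReal (((16 * κ / (κ - 1)) ^ Q)⁻¹) *
        (m (ball o (κ ^ (i - 1))) ^ (t / s) * ENNReal.ofReal (κ ^ (-((i : ℝ) + 1) * t))) ≤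
      weightMeasure m o s t U ∧
    weightMeasure m o s t U ≤
      m (ball o (κ ^ (i + 1))) ^ (t / s) * ENNReal.ofReal (κ ^ (-((i : ℝ) - 1) * t)) := by
  have hκ0 : 0 < κ := by linarith
  have hts : 1 ≤ t / s := (one_le_div hs).mpr hst
  have ht : 0 ≤ t := hs.le.trans hst
  have hQ : 0 ≤ Q := hdb.nonneg one_pos (hm o 1 one_pos).1 (hm o 1 one_pos).2.ne
  have hκi : κ ^ i = κ * κ ^ (i - 1) := by rw [← zpow_one_add₀ hκ0.ne']; ring_nf
  rw [hκi] at hx hball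
  have hUA : U ⊆ ball o (κ ^ (i + 1)) \ ball o (κ ^ (i - 1)) := fun y hy =>
    ⟨(hUsub hy).1, fun h => (hUsub hy).2 (subset_closure h)⟩
  have hCe : 0 < (16 * κ / (κ - 1)) ^ Q := Real.rpow_pos_of_pos (by bound) _
  refine ⟨?_, (weightMeasure_le_of_subset_ball_sdiff_ball hts ht hUA).trans_eq ?_⟩
  · calc _ = m (ball o (κ ^ (i - 1))) ^ (t / s - 1) * ENNReal.ofReal (κ ^ (i + 1)) ^ (-t) *
          ((ENNReal.ofReal ((16 * κ / (κ - 1)) ^ Q))⁻¹ * m (ball o (κ ^ (i - 1)))) := by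
          rw [ENNReal.ofReal_zpow_rpow_neg hκ0, ENNReal.ofReal_inv_of_pos hCe,
            ← ENNReal.rpow_sub_one_mul_self _ hts]
          push_cast
          ring
      _ ≤ _ := by
          gcongr
          exact (ENNReal.inv_mul_le_iff (by simpa using hCe) ENNReal.ofReal_ne_top).mpr
            (hdb.measure_ball_le_mul_measure_ball_of_dist_eq hQ hκ (zpow_pos hκ0 _) hx)
      _ ≤ _ := le_weightMeasure_of_ball_subset hts ht hball hUA
  · rw [ENNReal.ofReal_zpow_rpow_neg hκ0]
    push_cast
    ring_nf

/-- Two-sided bounds for the `μ_{s,t}`-measure of a piece of an annulus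
containing a definite ball. -/
theorem weighted_measure_annulus_piece_bounds
    {X : Type*} [MetricSpace X] [MeasurableSpace X] [BorelSpace X]
    (m : Measure X) (hm : BallRegular m)
    (Q : ℝ) (hdb : DoublingOfDim m Q)
    (o : X) (κ : ℝ) (hκ : 1 < κ) (i : ℤ)
    (s t : ℝ) (hs : 0 < s) (hst : s ≤ t)
    (U : Set X) (hU : MeasurableSet U)
    (hUsub : U ⊆ ball o (κ ^ (i + 1)) \ closure (ball o (κ ^ (i - 1))))
    (x : X) (hx : dist o x = (κ ^ i + κ ^ (i - 1)) / 2)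
    (hball : ball x ((κ ^ i - κ ^ (i - 1)) / 4) ⊆ U) :
    ENNReal.ofReal (((16 * κ / (κ - 1)) ^ Q)⁻¹) *
        (m (ball o (κ ^ (i - 1))) ^ (t / s) * ENNReal.ofReal (κ ^ (-((i : ℝ) + 1) * t))) ≤
      weightMeasure m o s t U ∧
    weightMeasure m o s t U ≤
      m (ball o (κ ^ (i + 1))) ^ (t / s) * ENNReal.ofReal (κ ^ (-((i : ℝ) - 1) * t)) :=
  weighted_measure_annulus_piece_bounds_general m hm Q hdb o κ hκ i s t hs hst U hUsub x hx hball
end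
end
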